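/- arXiv:2401.15388 — 6 statements merged into one kernel-verified Lean document; each statement's English description precedes it below -/
import Mathlib

section
/- Any meagre F_σ subset of ℝ can be written as a countable union of pairwise disjoint compact sets. -/
open Filter MeasureTheory Set Metric Topology

noncomputable def lipInf (f : ℝ → ℝ) (x : ℝ) : ENNReal :=
  Filter.liminf
    (fun r : ℝ => ⨆ y ∈ Metric.ball x r, ENNReal.ofReal (|f y - f x| / r))
    (nhdsWithin 0 (Set.Ioi (0:ℝ)))

noncomputable def lipSup (f : ℝ → ℝ) (x : ℝ) : ENNReal :=
  Filter.limsup
    (fun r : ℝ => ⨆ y ∈ Metric.ball x r, ENNReal.ofReal (|f y - f x| / r))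
    (nhdsWithin 0 (Set.Ioi (0:ℝ)))

/-- Absolute continuity of `f` on all of `ℝ`. -/
def AbsCont (f : ℝ → ℝ) : Prop :=
  ∀ ε > (0:ℝ), ∃ δ > (0:ℝ), ∀ (n : ℕ) (a b : Fin n → ℝ),
    (∀ i, a i ≤ b i) →
    (Pairwise fun i j => Disjoint (Set.Ioo (a i) (b i)) (Set.Ioo (a j) (b j))) →
    (∑ i, (b i - a i)) < δ → (∑ i, |f (b i) - f (a i)|) < ε

/-- `M` has everywhere positive (Lebesgue) measure. -/
def EPM (M : Set ℝ) : Prop :=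
  ∀ a b : ℝ, a < b → 0 < MeasureTheory.volume (M ∩ Set.Ioo a b)

noncomputable def Fhat (F : Set ℝ) : Set ℝ :=
  F ∪ ⋃ n : ℕ, {x : ℝ | Metric.infDist x F = 1 / (n + 1)}

lemma aux_decomp (C U : Set ℝ) (hC : IsClosed C) (hCi : interior C = ∅) (hU : IsOpen U) :
    ∃ K : ℕ → Set ℝ, (∀ k, IsCompact (K k)) ∧
      (Pairwise fun i j => Disjoint (K i) (K j)) ∧ (∀ k, K k ⊆ C ∩ U) ∧ C ∩ U = ⋃ k, K k := by
  rcases (C ∩ U).eq_empty_or_nonempty with hse | hne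
  · exact ⟨fun _ => ∅, fun _ => isCompact_empty, fun i j _ => disjoint_empty _ |>.symm,
      fun k => empty_subset _, by simp [hse]⟩
  · have key : ∀ x : ℝ, ∃ a b : ℝ, x ∈ C ∩ U →
        a < x ∧ x < b ∧ a ∉ C ∧ b ∉ C ∧ Icc a b ⊆ U := by
      intro x
      by_cases hx : x ∈ C ∩ U
      · obtain ⟨ε, hε, hball⟩ := Metric.isOpen_iff.1 hU x hx.2
        have hIoo : Ioo (x - ε) (x + ε) ⊆ U := by rw [← Real.ball_eq_Ioo]; exact hball
        have hbex : ∃ b ∈ Ioo x (x + ε), b ∉ C := by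
          by_contra h
          push_neg at h
          have hsub : Ioo x (x + ε) ⊆ interior C :=
            interior_maximal h isOpen_Ioo
          rw [hCi, subset_empty_iff, Ioo_eq_empty_iff] at hsub
          exact hsub (by linarith)
        have haex : ∃ a ∈ Ioo (x - ε) x, a ∉ C := by
          by_contra h
          push_neg at h
          have hsub : Ioo (x - ε) x ⊆ interior C :=
            interior_maximal h isOpen_Ioo
          rw [hCi, subset_empty_iff, Ioo_eq_empty_iff] at hsub
          exact hsub (by linarith)
        obtain ⟨b, hb, hbC⟩ := hbex
        obtain ⟨a, ha, haC⟩ := haex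
        refine ⟨a, b, fun _ => ⟨ha.2, hb.1, haC, hbC, ?_⟩⟩
        intro y hy
        exact hIoo ⟨by linarith [ha.1, hy.1], by linarith [hb.2, hy.2]⟩
      · exact ⟨0, 0, fun h => absurd h hx⟩
    choose a b hab using key
    have hnhds : ∀ x ∈ C ∩ U, Ioo (a x) (b x) ∈ nhdsWithin x (C ∩ U) := by
      intro x hx
      exact mem_nhdsWithin_of_mem_nhds (Ioo_mem_nhds (hab x hx).1 (hab x hx).2.1)
    obtain ⟨t, hts, htc, hcov⟩ := TopologicalSpace.countable_cover_nhdsWithin hnhds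
    have htne : t.Nonempty := by
      obtain ⟨x, hx⟩ := hne
      obtain ⟨y, hy, -⟩ := mem_iUnion₂.1 (hcov hx)
      exact ⟨y, hy⟩
    obtain ⟨g, hg⟩ := htc.exists_eq_range htne
    have hgs : ∀ k, g k ∈ C ∩ U := fun k => hts (hg ▸ mem_range_self k)
    -- key fact: points of C in Icc are in Ioo
    have F1 : ∀ k, ∀ z ∈ C, z ∈ Icc (a (g k)) (b (g k)) → z ∈ Ioo (a (g k)) (b (g k)) := by
      intro k z hzC hz
      obtain ⟨h1, h2, h3, h4, -⟩ := hab (g k) (hgs k)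
      constructor
      · rcases lt_or_eq_of_le hz.1 with h | h
        · exact h
        · exact absurd (h ▸ hzC) h3
      · rcases lt_or_eq_of_le hz.2 with h | h
        · exact h
        · exact absurd (h ▸ hzC) h4
    refine ⟨fun k => C ∩ Icc (a (g k)) (b (g k)) ∩ ⋂ j ∈ Finset.range k, (Ioo (a (g j)) (b (g j)))ᶜ,
      ?_, ?_, ?_, ?_⟩
    · intro k
      refine IsCompact.of_isClosed_subset isCompact_Icc ?_ (fun z hz => hz.1.2)
      exact ((hC.inter isClosed_Icc).inter
        (isClosed_biInter fun j _ => isOpen_Ioo.isClosed_compl))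
    · have hmono : ∀ i j, i < j → Disjoint
          (C ∩ Icc (a (g i)) (b (g i)) ∩ ⋂ m ∈ Finset.range i, (Ioo (a (g m)) (b (g m)))ᶜ)
          (C ∩ Icc (a (g j)) (b (g j)) ∩ ⋂ m ∈ Finset.range j, (Ioo (a (g m)) (b (g m)))ᶜ) := by
        intro i j hij
        rw [Set.disjoint_left]
        intro z hzi hzj
        have hzIoo : z ∈ Ioo (a (g i)) (b (g i)) := F1 i z hzi.1.1 hzi.1.2
        have : z ∉ Ioo (a (g i)) (b (g i)) := by
          have := hzj.2
          simp only [Set.mem_iInter] at this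
          exact this i (Finset.mem_range.2 hij)
        exact this hzIoo
      intro i j hij
      rcases lt_or_gt_of_ne hij with h | h
      · exact hmono i j h
      · exact (hmono j i h).symm
    · intro k z hz
      exact ⟨hz.1.1, (hab (g k) (hgs k)).2.2.2.2 hz.1.2⟩
    · ext x
      constructor
      · intro hx
        obtain ⟨y, hy, hxy⟩ := mem_iUnion₂.1 (hcov hx)
        obtain ⟨k0, rfl⟩ := hg ▸ hy
        have hex : ∃ k, x ∈ Icc (a (g k)) (b (g k)) := ⟨k0, Ioo_subset_Icc_self hxy⟩
        refine mem_iUnion.2 ⟨Nat.find hex, ⟨hx.1, Nat.find_spec hex⟩, ?_⟩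
        simp only [Set.mem_iInter]
        intro j hj
        intro hcon
        exact Nat.find_min hex (Finset.mem_range.1 hj) (Ioo_subset_Icc_self hcon)
      · intro hx
        obtain ⟨k, hk⟩ := mem_iUnion.1 hx
        exact ⟨hk.1.1, (hab (g k) (hgs k)).2.2.2.2 hk.1.2⟩

theorem meagre_Fsigma_is_disjoint_Ksigma (A : Set ℝ)
    (hmeagre : IsMeagre A)
    (hFsigma : ∃ F : ℕ → Set ℝ, (∀ n, IsClosed (F n)) ∧ A = ⋃ n, F n) :
    ∃ K : ℕ → Set ℝ, (∀ n, IsCompact (K n)) ∧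
      (Pairwise fun m n => Disjoint (K m) (K n)) ∧ A = ⋃ n, K n := by
  classical
  obtain ⟨F, hFc, hFA⟩ := hFsigma
  have hAint : interior A = ∅ :=
    interior_eq_empty_iff_dense_compl.mpr (dense_of_mem_residual hmeagre)
  set C : ℕ → Set ℝ := fun n => ⋃ m ∈ Finset.range (n + 1), F m with hCdef
  set U : ℕ → Set ℝ := fun n => (⋃ m ∈ Finset.range n, F m)ᶜ with hUdef
  have hCc : ∀ n, IsClosed (C n) := fun n => isClosed_biUnion_finset fun m _ => hFc m
  have hCA : ∀ n, C n ⊆ A := fun n => by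
    rw [hFA]; exact iUnion₂_subset fun m _ => subset_iUnion F m
  have hCi : ∀ n, interior (C n) = ∅ := fun n =>
    subset_empty_iff.1 (hAint ▸ interior_mono (hCA n))
  have hUo : ∀ n, IsOpen (U n) :=
    fun n => (isClosed_biUnion_finset fun m _ => hFc m).isOpen_compl
  have hA : A = ⋃ n, C n ∩ U n := by
    ext x
    constructor
    · intro hx
      rw [hFA] at hx
      obtain ⟨n0, hn0⟩ := mem_iUnion.1 hx
      have hex : ∃ n, x ∈ F n := ⟨n0, hn0⟩
      refine mem_iUnion.2 ⟨Nat.find hex, ?_, ?_⟩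
      · exact mem_biUnion (Finset.mem_range.2 (Nat.lt_succ_self _)) (Nat.find_spec hex)
      · intro hcon
        obtain ⟨m, hm, hmx⟩ := mem_iUnion₂.1 hcon
        exact Nat.find_min hex (Finset.mem_range.1 hm) hmx
    · intro hx
      obtain ⟨n, hn⟩ := mem_iUnion.1 hx
      exact hCA n hn.1
  have hlev : ∀ n m, n < m → Disjoint (C n ∩ U n) (C m ∩ U m) := by
    intro n m hnm
    rw [Set.disjoint_left]
    intro z hzn hzm
    apply hzm.2
    obtain ⟨k, hk, hkz⟩ := mem_iUnion₂.1 hzn.1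
    exact mem_biUnion (Finset.mem_range.2 (lt_of_lt_of_le (Finset.mem_range.1 hk) hnm)) hkz
  choose K hK1 hK2 hK3 hK4 using fun n => aux_decomp (C n) (U n) (hCc n) (hCi n) (hUo n)
  set e : ℕ ≃ ℕ × ℕ := (Denumerable.eqv (ℕ × ℕ)).symm with hedef
  refine ⟨fun k => K (e k).1 (e k).2, fun k => hK1 _ _, ?_, ?_⟩
  · intro i j hij
    by_cases h : (e i).1 = (e j).1
    · have hne2 : (e i).2 ≠ (e j).2 := by
        intro h2
        exact hij (e.injective (Prod.ext h h2))
      have := hK2 (e j).1 hne2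
      show Disjoint (K (e i).1 (e i).2) (K (e j).1 (e j).2)
      rw [h]
      exact this
    · rcases lt_or_gt_of_ne h with hl | hl
      · exact (hlev _ _ hl).mono (hK3 _ _) (hK3 _ _)
      · exact ((hlev _ _ hl).symm).mono (hK3 _ _) (hK3 _ _)
  · rw [hA]
    ext x
    simp only [mem_iUnion]
    constructor
    · rintro ⟨n, hn⟩
      rw [hK4 n] at hn
      obtain ⟨m, hm⟩ := mem_iUnion.1 hn
      refine ⟨e.symm (n, m), ?_⟩
      rw [Equiv.apply_symm_apply]
      exact hm
    · rintro ⟨k, hk⟩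
      exact ⟨(e k).1, (hK4 _) ▸ mem_iUnion.2 ⟨(e k).2, hk⟩⟩
end

section
/- Let M ⊆ ℝ be a measurable set such that |M ∩ I| > 0 for every nonempty open interval I (M has everywhere positive measure). Then there exist disjoint measurable subsets M₁, M₂ ⊆ M, both having everywhere positive measure. -/
open Filter MeasureTheory Set Metric Topology

open scoped ENNReal

/-- Any set of positive measure contains a measurable subset of positive measure at most `ε`. -/
lemma exists_small_epm_aux (S : Set ℝ) (hS : MeasurableSet S) (h : 0 < volume S)
    {ε : ℝ} (hε : 0 < ε) :
    ∃ C : Set ℝ, C ⊆ S ∧ MeasurableSet C ∧ 0 < volume C ∧ volume C ≤ ENNReal.ofReal ε := by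
  by_contra hc
  push_neg at hc
  have hz : ∀ k : ℤ, volume (S ∩ Ico (k • ε) ((k+1) • ε)) = 0 := by
    intro k
    by_contra hk
    have hle : volume (S ∩ Ico (k • ε) ((k+1) • ε)) ≤ ENNReal.ofReal ε := by
      refine (measure_mono inter_subset_right).trans ?_
      rw [Real.volume_Ico]
      apply ENNReal.ofReal_le_ofReal
      simp [add_smul, zsmul_eq_mul]
    exact absurd hle (hc _ inter_subset_left (hS.inter measurableSet_Ico)
      (pos_iff_ne_zero.mpr hk)).not_ge
  have h0 : volume S = 0 := by
    have hcov : S ⊆ ⋃ k : ℤ, S ∩ Ico (k • ε) ((k+1) • ε) := by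
      intro x hx
      have hu := iUnion_Ico_zsmul hε (α := ℝ)
      have hx2 : x ∈ ⋃ n : ℤ, Ico (n • ε) ((n+1) • ε) := hu ▸ mem_univ x
      obtain ⟨k, hk⟩ := mem_iUnion.mp hx2
      exact mem_iUnion.mpr ⟨k, hx, hk⟩
    exact measure_mono_null hcov (measure_iUnion_null hz)
  exact h.ne' h0

lemma step_epm_aux (T P : Set ℝ) (hT : MeasurableSet T) (hTpos : 0 < volume T)
    (hP1 : 0 < volume P) (hP2 : volume P ≤ 1) :
    ∃ C : Set ℝ, C ⊆ T ∧ MeasurableSet C ∧ 0 < volume C ∧ volume C ≤ volume P / 4 := by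
  have hfin : volume P ≠ ⊤ := (hP2.trans_lt (by norm_num)).ne
  have hε : 0 < (volume P).toReal / 4 := by
    have := ENNReal.toReal_pos hP1.ne' hfin
    positivity
  obtain ⟨C, h1, h2, h3, h4⟩ := exists_small_epm_aux T hT hTpos hε
  refine ⟨C, h1, h2, h3, h4.trans_eq ?_⟩
  rw [ENNReal.ofReal_div_of_pos (by norm_num), ENNReal.ofReal_toReal hfin]
  norm_num

noncomputable def seqC_epm_aux (T : ℕ → Set ℝ) (hT : ∀ n, MeasurableSet (T n))
    (hTpos : ∀ n, 0 < volume (T n)) :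
    ∀ n : ℕ, {c : Set ℝ // c ⊆ T n ∧ MeasurableSet c ∧ 0 < volume c ∧ volume c ≤ 1}
  | 0 => ⟨(exists_small_epm_aux (T 0) (hT 0) (hTpos 0) one_pos).choose, by
      obtain ⟨h1, h2, h3, h4⟩ := (exists_small_epm_aux (T 0) (hT 0) (hTpos 0) one_pos).choose_spec
      exact ⟨h1, h2, h3, by simpa using h4⟩⟩
  | n+1 =>
    ⟨(step_epm_aux (T (n+1)) (seqC_epm_aux T hT hTpos n).1 (hT (n+1)) (hTpos (n+1))
        (seqC_epm_aux T hT hTpos n).2.2.2.1 (seqC_epm_aux T hT hTpos n).2.2.2.2).choose, by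
      obtain ⟨h1, h2, h3, h4⟩ := (step_epm_aux (T (n+1)) (seqC_epm_aux T hT hTpos n).1 (hT (n+1))
        (hTpos (n+1)) (seqC_epm_aux T hT hTpos n).2.2.2.1
        (seqC_epm_aux T hT hTpos n).2.2.2.2).choose_spec
      refine ⟨h1, h2, h3, h4.trans ?_⟩
      refine (ENNReal.div_le_of_le_mul (le_mul_of_one_le_right zero_le (by norm_num))).trans
        (seqC_epm_aux T hT hTpos n).2.2.2.2⟩

lemma seqC_epm_aux_chain (T : ℕ → Set ℝ) (hT : ∀ n, MeasurableSet (T n))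
    (hTpos : ∀ n, 0 < volume (T n)) (n : ℕ) :
    volume (seqC_epm_aux T hT hTpos (n+1)).1 ≤ volume (seqC_epm_aux T hT hTpos n).1 / 4 := by
  have h := (step_epm_aux (T (n+1)) (seqC_epm_aux T hT hTpos n).1 (hT (n+1)) (hTpos (n+1))
      (seqC_epm_aux T hT hTpos n).2.2.2.1 (seqC_epm_aux T hT hTpos n).2.2.2.2).choose_spec.2.2.2
  simpa [seqC_epm_aux] using h

theorem epm_splits_into_two (M : Set ℝ) (hM : MeasurableSet M) (hEPM : EPM M) :
    ∃ M₁ M₂ : Set ℝ, M₁ ⊆ M ∧ M₂ ⊆ M ∧ MeasurableSet M₁ ∧ MeasurableSet M₂ ∧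
      Disjoint M₁ M₂ ∧ EPM M₁ ∧ EPM M₂ := by
  classical
  -- enumerate pairs of rationals
  set e : ℕ → ℚ × ℚ := fun n => (Denumerable.eqv (ℚ × ℚ)).symm n with he
  set T : ℕ → Set ℝ := fun n =>
    if ((e (n/2)).1 : ℝ) < ((e (n/2)).2 : ℝ)
      then M ∩ Ioo ((e (n/2)).1 : ℝ) ((e (n/2)).2 : ℝ)
      else M ∩ Ioo 0 1 with hTdef
  have hT : ∀ n, MeasurableSet (T n) := by
    intro n
    simp only [hTdef]
    split <;> exact hM.inter measurableSet_Ioo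
  have hTpos : ∀ n, 0 < volume (T n) := by
    intro n
    simp only [hTdef]
    split
    · exact hEPM _ _ (by assumption)
    · exact hEPM 0 1 one_pos
  have hTM : ∀ n, T n ⊆ M := by
    intro n
    simp only [hTdef]
    split <;> exact inter_subset_left
  set C : ℕ → Set ℝ := fun n => (seqC_epm_aux T hT hTpos n).1 with hC
  have hCsub : ∀ n, C n ⊆ T n := fun n => (seqC_epm_aux T hT hTpos n).2.1
  have hCm : ∀ n, MeasurableSet (C n) := fun n => (seqC_epm_aux T hT hTpos n).2.2.1
  have hCpos : ∀ n, 0 < volume (C n) := fun n => (seqC_epm_aux T hT hTpos n).2.2.2.1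
  have hCone : ∀ n, volume (C n) ≤ 1 := fun n => (seqC_epm_aux T hT hTpos n).2.2.2.2
  have hchain : ∀ n, volume (C (n+1)) ≤ volume (C n) / 4 := seqC_epm_aux_chain T hT hTpos
  -- geometric decay
  have hdecay : ∀ n k, volume (C (n+1+k)) ≤ volume (C n) * 2⁻¹ ^ (k+2) := by
    intro n k
    induction k with
    | zero =>
      refine (hchain n).trans ?_
      rw [div_eq_mul_inv, pow_two, ← ENNReal.mul_inv (by norm_num) (by norm_num)]
      norm_num
    | succ k ih =>
      have h1 : volume (C (n+1+(k+1))) ≤ volume (C (n+1+k)) / 4 := hchain (n+1+k)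
      refine h1.trans ?_
      rw [div_eq_mul_inv]
      calc volume (C (n+1+k)) * 4⁻¹ ≤ volume (C (n+1+k)) * 2⁻¹ := by
            gcongr
            norm_num
        _ ≤ volume (C n) * 2⁻¹ ^ (k+2) * 2⁻¹ := by gcongr
        _ = volume (C n) * 2⁻¹ ^ (k+1+2) := by ring
  -- tail unions
  set U : ℕ → Set ℝ := fun n => ⋃ k : ℕ, C (n+1+k) with hU
  have hUm : ∀ n, MeasurableSet (U n) := fun n => MeasurableSet.iUnion fun k => hCm _
  have hUvol : ∀ n, volume (U n) ≤ volume (C n) * 2⁻¹ := by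
    intro n
    refine (measure_iUnion_le _).trans ?_
    have h1 : ∑' k : ℕ, volume (C (n+1+k)) ≤ ∑' k : ℕ, volume (C n) * 2⁻¹ ^ (k+2) :=
      ENNReal.tsum_le_tsum fun k => hdecay n k
    refine h1.trans ?_
    rw [ENNReal.tsum_mul_left]
    have h2 : ∑' k : ℕ, (2⁻¹ : ℝ≥0∞) ^ (k+2) = 2⁻¹ := by
      simp only [pow_add, ENNReal.tsum_mul_right, ENNReal.tsum_geometric,
        ENNReal.one_sub_inv_two, inv_inv, pow_two]
      rw [← mul_assoc, ENNReal.mul_inv_cancel (by norm_num) (by norm_num), one_mul]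
    rw [h2]
  set D : ℕ → Set ℝ := fun n => C n \ U n with hD
  have hDm : ∀ n, MeasurableSet (D n) := fun n => (hCm n).diff (hUm n)
  have hDsub : ∀ n, D n ⊆ C n := fun n => diff_subset
  have hDpos : ∀ n, 0 < volume (D n) := by
    intro n
    rw [pos_iff_ne_zero]
    intro h0
    have hcover : C n ⊆ D n ∪ U n := fun x hx => by
      by_cases hxU : x ∈ U n
      · exact Or.inr hxU
      · exact Or.inl ⟨hx, hxU⟩
    have h1 : volume (C n) ≤ volume (D n) + volume (U n) :=
      (measure_mono hcover).trans (measure_union_le _ _)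
    rw [h0, zero_add] at h1
    have h2 : volume (C n) ≤ volume (C n) * 2⁻¹ := h1.trans (hUvol n)
    have hfin : volume (C n) ≠ ⊤ := ((hCone n).trans_lt (by norm_num)).ne
    have h3 : volume (C n) * 2⁻¹ < volume (C n) := by
      rw [← div_eq_mul_inv]
      exact ENNReal.half_lt_self (hCpos n).ne' hfin
    exact absurd h2 h3.not_ge
  -- pairwise disjointness
  have hDdisj : ∀ m n, m < n → Disjoint (D m) (D n) := by
    intro m n hmn
    rw [disjoint_left]
    intro x hxm hxn
    have hxU : x ∈ U m := by
      have : n = m + 1 + (n - m - 1) := by omega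
      exact mem_iUnion.mpr ⟨n - m - 1, this ▸ (hDsub n hxn)⟩
    exact hxm.2 hxU
  refine ⟨⋃ n : ℕ, D (2*n), ⋃ n : ℕ, D (2*n+1), ?_, ?_, ?_, ?_, ?_, ?_, ?_⟩
  · exact iUnion_subset fun n => (hDsub _).trans ((hCsub _).trans (hTM _))
  · exact iUnion_subset fun n => (hDsub _).trans ((hCsub _).trans (hTM _))
  · exact MeasurableSet.iUnion fun n => hDm _
  · exact MeasurableSet.iUnion fun n => hDm _
  · rw [disjoint_left]
    intro x hx1 hx2
    obtain ⟨m, hm⟩ := mem_iUnion.mp hx1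
    obtain ⟨n, hn⟩ := mem_iUnion.mp hx2
    rcases lt_trichotomy (2*m) (2*n+1) with h | h | h
    · exact (disjoint_left.mp (hDdisj _ _ h) hm) hn
    · omega
    · exact (disjoint_left.mp (hDdisj _ _ h) hn) hm
  · -- EPM M₁
    intro a b hab
    obtain ⟨q, haq, hqb⟩ := exists_rat_btwn hab
    obtain ⟨r, hqr, hrb⟩ := exists_rat_btwn hqb
    set m : ℕ := Denumerable.eqv (ℚ × ℚ) (q, r) with hm
    have hem : e m = (q, r) := by simp [he, hm]
    have hdiv : (2*m)/2 = m := by omega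
    have hTm : T (2*m) = M ∩ Ioo (q:ℝ) (r:ℝ) := by
      simp only [hTdef, hdiv, hem]
      rw [if_pos (by exact_mod_cast hqr)]
    have hsub : D (2*m) ⊆ (⋃ n : ℕ, D (2*n)) ∩ Ioo a b := by
      intro x hx
      refine ⟨mem_iUnion.mpr ⟨m, hx⟩, ?_⟩
      have hx2 : x ∈ M ∩ Ioo (q:ℝ) (r:ℝ) := hTm ▸ hCsub _ (hDsub _ hx)
      exact ⟨haq.trans hx2.2.1, hx2.2.2.trans hrb⟩
    exact (hDpos (2*m)).trans_le (measure_mono hsub)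
  · -- EPM M₂
    intro a b hab
    obtain ⟨q, haq, hqb⟩ := exists_rat_btwn hab
    obtain ⟨r, hqr, hrb⟩ := exists_rat_btwn hqb
    set m : ℕ := Denumerable.eqv (ℚ × ℚ) (q, r) with hm
    have hem : e m = (q, r) := by simp [he, hm]
    have hdiv : (2*m+1)/2 = m := by omega
    have hTm : T (2*m+1) = M ∩ Ioo (q:ℝ) (r:ℝ) := by
      simp only [hTdef, hdiv, hem]
      rw [if_pos (by exact_mod_cast hqr)]
    have hsub : D (2*m+1) ⊆ (⋃ n : ℕ, D (2*n+1)) ∩ Ioo a b := by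
      intro x hx
      refine ⟨mem_iUnion.mpr ⟨m, hx⟩, ?_⟩
      have hx2 : x ∈ M ∩ Ioo (q:ℝ) (r:ℝ) := hTm ▸ hCsub _ (hDsub _ hx)
      exact ⟨haq.trans hx2.2.1, hx2.2.2.trans hrb⟩
    exact (hDpos (2*m+1)).trans_le (measure_mono hsub)
end

section
/- Let M ⊆ ℝ be a measurable set with everywhere positive measure, and let n ∈ ℕ. Then there exist pairwise disjoint measurable subsets M₁, ..., Mₙ of M, each with everywhere positive measure. -/
open Filter MeasureTheory Set Metric Topology

lemma interior_union_empty' {X : Type*} [TopologicalSpace X] {A B : Set X}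
    (hA : IsClosed A) (hAi : interior A = ∅) (hBi : interior B = ∅) :
    interior (A ∪ B) = ∅ := by
  have h1 : interior (A ∪ B) ∩ Aᶜ ⊆ interior B := by
    refine interior_maximal ?_ ((isOpen_interior).inter hA.isOpen_compl)
    rintro x ⟨hx, hxA⟩
    rcases interior_subset hx with h | h
    · exact absurd h hxA
    · exact h
  rw [hBi, Set.subset_empty_iff, ← Set.disjoint_iff_inter_eq_empty,
    Set.disjoint_compl_right_iff_subset] at h1
  have h2 := interior_maximal h1 isOpen_interior
  rwa [hAi, Set.subset_empty_iff] at h2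

lemma interior_iUnion_fin_empty {X : Type*} [TopologicalSpace X] :
    ∀ (m : ℕ) (K : Fin m → Set X), (∀ i, IsClosed (K i)) → (∀ i, interior (K i) = ∅) →
    interior (⋃ i, K i) = ∅ := by
  intro m
  induction m with
  | zero => intro K _ _; simp
  | succ m ih =>
    intro K hc hi
    have heq : (⋃ i, K i) = K 0 ∪ ⋃ i : Fin m, K i.succ := by
      ext x
      simp only [Set.mem_iUnion, Set.mem_union]
      constructor
      · rintro ⟨i, hxi⟩
        refine Fin.cases (fun h => Or.inl h) (fun j h => Or.inr ⟨j, h⟩) i hxi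
      · rintro (h | ⟨j, hj⟩)
        exacts [⟨0, h⟩, ⟨j.succ, hj⟩]
    rw [heq]
    exact interior_union_empty' (hc 0) (hi 0)
      (ih (fun i => K i.succ) (fun i => hc i.succ) (fun i => hi i.succ))


lemma exists_dense_open_small (ε : ENNReal) (hε : 0 < ε) :
    ∃ V : Set ℝ, IsOpen V ∧ Dense V ∧ volume V < ε := by
  have hq : volume (Set.range ((↑) : ℚ → ℝ)) = 0 :=
    (Set.countable_range _).measure_zero _
  obtain ⟨V, hVsub, hVopen, hVlt⟩ :=
    Set.exists_isOpen_lt_of_lt (Set.range ((↑) : ℚ → ℝ)) ε (by rw [hq]; exact hε)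
  exact ⟨V, hVopen, Rat.denseRange_cast.mono hVsub, hVlt⟩

lemma exists_fat_nowhereDense (M : Set ℝ) (hM : MeasurableSet M) (p q : ℝ)
    (hpos : 0 < volume (M ∩ Set.Ioo p q)) :
    ∃ K : Set ℝ, K ⊆ M ∩ Set.Ioo p q ∧ IsCompact K ∧ interior K = ∅ ∧ 0 < volume K := by
  have hSm : MeasurableSet (M ∩ Set.Ioo p q) := hM.inter measurableSet_Ioo
  have hfin : volume (M ∩ Set.Ioo p q) ≠ ⊤ := by
    refine ne_top_of_le_ne_top ?_ (measure_mono Set.inter_subset_right)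
    simp [Real.volume_Ioo]
  obtain ⟨C, hCsub, hCcomp, hClt⟩ :=
    hSm.exists_isCompact_lt_add hfin (ε := volume (M ∩ Set.Ioo p q)) hpos.ne'
  have hCpos : 0 < volume C := by
    by_contra h
    push_neg at h
    simp only [le_zero_iff] at h
    rw [h, zero_add] at hClt
    exact absurd hClt (lt_irrefl _)
  obtain ⟨V, hVopen, hVdense, hVlt⟩ := exists_dense_open_small (volume C) hCpos
  refine ⟨C \ V, (Set.diff_subset).trans hCsub, hCcomp.diff hVopen, ?_, ?_⟩
  · by_contra h
    obtain ⟨x, hx⟩ := Set.nonempty_iff_ne_empty.mpr h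
    obtain ⟨y, hyI, hyV⟩ := hVdense.inter_open_nonempty _ isOpen_interior ⟨x, hx⟩
    exact (interior_subset hyI).2 hyV
  · by_contra h
    push_neg at h
    simp only [le_zero_iff] at h
    have hle : volume C ≤ volume (C \ V) + volume V := by
      refine le_trans (measure_mono ?_) (measure_union_le _ _)
      intro x hx
      by_cases hxV : x ∈ V
      · exact Or.inr hxV
      · exact Or.inl ⟨hx, hxV⟩
    rw [h, zero_add] at hle
    exact absurd (lt_of_lt_of_le hVlt hle) (lt_irrefl _)

lemma step_exists (M : Set ℝ) (hM : MeasurableSet M) (hEPM : EPM M) (n : ℕ)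
    (U : Set ℝ) (p q : ℝ) :
    ∃ K : Fin n → Set ℝ,
      (∀ i, K i ⊆ M ∧ MeasurableSet (K i) ∧ IsClosed (K i) ∧ interior (K i) = ∅ ∧
        Disjoint (K i) U) ∧
      (Pairwise fun i j => Disjoint (K i) (K j)) ∧
      (IsClosed U → interior U = ∅ → p < q → ∀ i, K i ⊆ Set.Ioo p q ∧ 0 < volume (K i)) := by
  by_cases hcond : IsClosed U ∧ interior U = ∅ ∧ p < q
  · obtain ⟨hUc, hUi, hpq⟩ := hcond
    have hWopen : IsOpen (Set.Ioo p q \ U) := isOpen_Ioo.sdiff hUc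
    have hWne : (Set.Ioo p q \ U).Nonempty := by
      by_contra h
      rw [Set.not_nonempty_iff_eq_empty, Set.diff_eq_empty] at h
      have h2 := interior_maximal h isOpen_Ioo
      rw [hUi, Set.subset_empty_iff] at h2
      exact absurd h2 (Set.nonempty_Ioo.mpr hpq).ne_empty
    obtain ⟨x, hxW⟩ := hWne
    obtain ⟨ε, hε, hball⟩ := Metric.isOpen_iff.mp hWopen x hxW
    rw [Real.ball_eq_Ioo] at hball
    set d : ℝ := 2 * ε / (n + 1) with hd_def
    have hn1 : (0:ℝ) < n + 1 := by positivity
    have hd : 0 < d := by positivity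
    set a : Fin n → ℝ := fun i => x - ε + i * d with ha_def
    have hsub : ∀ i : Fin n, Set.Ioo (a i) (a i + d) ⊆ Set.Ioo (x - ε) (x + ε) := by
      intro i
      apply Set.Ioo_subset_Ioo
      · have : (0:ℝ) ≤ (i : ℝ) * d := by positivity
        simp only [ha_def]; linarith
      · have hi : ((i : ℕ) : ℝ) + 1 ≤ (n : ℝ) + 1 := by
          have := i.isLt
          have : ((i : ℕ) : ℝ) ≤ (n : ℝ) := by exact_mod_cast Nat.le_of_lt this
          linarith
        have h2 : ((n : ℝ) + 1) * d = 2 * ε := by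
          rw [hd_def]; field_simp
        simp only [ha_def]
        nlinarith [mul_le_mul_of_nonneg_right hi hd.le]
    have hlt : ∀ i : Fin n, a i < a i + d := fun i => lt_add_of_pos_right _ hd
    have hfat : ∀ i : Fin n, ∃ K, K ⊆ M ∩ Set.Ioo (a i) (a i + d) ∧ IsCompact K ∧
        interior K = ∅ ∧ 0 < volume K :=
      fun i => exists_fat_nowhereDense M hM _ _ (hEPM _ _ (hlt i))
    choose K hK1 hK2 hK3 hK4 using hfat
    have hKI : ∀ i, K i ⊆ Set.Ioo (a i) (a i + d) :=
      fun i => (hK1 i).trans Set.inter_subset_right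
    have hKW : ∀ i, K i ⊆ Set.Ioo p q \ U := fun i => ((hKI i).trans (hsub i)).trans hball
    refine ⟨K, fun i => ⟨(hK1 i).trans Set.inter_subset_left,
      (hK2 i).isClosed.measurableSet, (hK2 i).isClosed, hK3 i, ?_⟩, ?_, ?_⟩
    · exact Set.disjoint_left.mpr fun y hy => (hKW i hy).2
    · have key : ∀ i j : Fin n, i < j → Disjoint (K i) (K j) := by
        intro i j hij
        refine Set.disjoint_of_subset (hKI i) (hKI j) ?_
        rw [Set.Ioo_disjoint_Ioo]
        have hij' : ((i : ℕ) : ℝ) + 1 ≤ ((j : ℕ) : ℝ) := by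
          exact_mod_cast Nat.succ_le_of_lt hij
        have : a i + d ≤ a j := by
          simp only [ha_def]
          nlinarith [mul_le_mul_of_nonneg_right hij' hd.le]
        calc min (a i + d) (a j + d) ≤ a i + d := min_le_left _ _
          _ ≤ a j := this
          _ ≤ max (a i) (a j) := le_max_right _ _
      intro i j hij
      rcases lt_or_gt_of_ne hij with h | h
      · exact key i j h
      · exact (key j i h).symm
    · exact fun _ _ _ i => ⟨fun y hy => (hKW i hy).1, hK4 i⟩
  · refine ⟨fun _ => ∅, fun i => ⟨Set.empty_subset _, MeasurableSet.empty, isClosed_empty,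
      interior_empty, disjoint_bot_left⟩, fun i j _ => disjoint_bot_left, ?_⟩
    intro h1 h2 h3
    exact absurd ⟨h1, h2, h3⟩ hcond

theorem epm_splits_into_n (M : Set ℝ) (hM : MeasurableSet M) (hEPM : EPM M) (n : ℕ) :
    ∃ Ms : Fin n → Set ℝ,
      (∀ i, Ms i ⊆ M ∧ MeasurableSet (Ms i) ∧ EPM (Ms i)) ∧
      (Pairwise fun i j => Disjoint (Ms i) (Ms j)) := by
  classical
  set e : ℕ → ℚ × ℚ := fun k => (Denumerable.eqv (ℚ × ℚ)).symm k with he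
  choose F hF1 hF2 hF3 using fun (U : Set ℝ) (k : ℕ) =>
    step_exists M hM hEPM n U ((e k).1 : ℝ) ((e k).2 : ℝ)
  set U : ℕ → Set ℝ := fun k => Nat.rec ∅ (fun k Uk => Uk ∪ ⋃ i, F Uk k i) k with hU
  have hU0 : U 0 = ∅ := rfl
  have hUsucc : ∀ k, U (k + 1) = U k ∪ ⋃ i, F (U k) k i := fun k => rfl
  set A : ℕ → Fin n → Set ℝ := fun k => F (U k) k with hA
  have hinv : ∀ k, IsClosed (U k) ∧ interior (U k) = ∅ := by
    intro k
    induction k with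
    | zero => exact ⟨isClosed_empty, interior_empty⟩
    | succ k ih =>
      have hclosed : ∀ i, IsClosed (A k i) := fun i => (hF1 (U k) k i).2.2.1
      refine ⟨?_, ?_⟩
      · rw [hUsucc]
        exact ih.1.union (isClosed_iUnion_of_finite hclosed)
      · rw [hUsucc]
        exact interior_union_empty' ih.1 ih.2
          (interior_iUnion_fin_empty n _ hclosed fun i => (hF1 (U k) k i).2.2.2.1)
  have hUmono : Monotone U := by
    apply monotone_nat_of_le_succ
    intro k
    rw [hUsucc]
    exact Set.subset_union_left
  have hAU : ∀ k i, A k i ⊆ U (k + 1) := by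
    intro k i
    rw [hUsucc]
    exact (Set.subset_iUnion (fun i => F (U k) k i) i).trans Set.subset_union_right
  refine ⟨fun i => ⋃ k, A k i, fun i => ⟨?_, ?_, ?_⟩, ?_⟩
  · exact Set.iUnion_subset fun k => (hF1 (U k) k i).1
  · exact MeasurableSet.iUnion fun k => (hF1 (U k) k i).2.1
  · intro a b hab
    obtain ⟨p, hap, hpb⟩ := exists_rat_btwn hab
    obtain ⟨q, hpq, hqb⟩ := exists_rat_btwn hpb
    obtain ⟨k, hk⟩ := (Denumerable.eqv (ℚ × ℚ)).symm.surjective (p, q)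
    have hek : e k = (p, q) := hk
    have hpq' : ((e k).1 : ℝ) < ((e k).2 : ℝ) := by rw [hek]; exact hpq
    have h3 := hF3 (U k) k (hinv k).1 (hinv k).2 hpq' i
    have hsub : A k i ⊆ Set.Ioo a b := by
      refine h3.1.trans ?_
      rw [hek]
      exact Set.Ioo_subset_Ioo hap.le hqb.le
    refine lt_of_lt_of_le h3.2 (measure_mono ?_)
    exact Set.subset_inter (Set.subset_iUnion (fun k => A k i) k) hsub
  · intro i j hij
    refine Set.disjoint_iUnion_left.mpr fun k => Set.disjoint_iUnion_right.mpr fun m => ?_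
    rcases lt_trichotomy k m with h | h | h
    · have h1 : A k i ⊆ U m := (hAU k i).trans (hUmono h)
      exact ((hF1 (U m) m j).2.2.2.2.symm).mono_left h1
    · subst h
      exact hF2 (U k) k hij
    · have h1 : A m j ⊆ U k := (hAU m j).trans (hUmono h)
      exact ((hF1 (U k) k i).2.2.2.2).mono_right h1
end

section
/- Any closed subset of ℝ with everywhere positive measure contains a nowhere dense compact set of positive Lebesgue measure inside any given nonempty open interval. -/
open Filter MeasureTheory Set Metric Topology

theorem closed_epm_contains_nowhere_dense_compact (F : Set ℝ) (hF : IsClosed F)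
    (hEPM : EPM F) (a b : ℝ) (hab : a < b) :
    ∃ K : Set ℝ, K ⊆ F ∩ Set.Ioo a b ∧ IsCompact K ∧
      interior (closure K) = ∅ ∧ 0 < MeasureTheory.volume K := by
  set a' : ℝ := a + (b - a) / 4 with ha'
  set b' : ℝ := b - (b - a) / 4 with hb'
  have h1 : a < a' := by simp [ha']; linarith
  have h2 : a' < b' := by simp [ha', hb']; linarith
  have h3 : b' < b := by simp [hb']; linarith
  set A : Set ℝ := F ∩ Set.Icc a' b' with hA
  have hApos : 0 < volume A :=
    lt_of_lt_of_le (hEPM a' b' h2) (measure_mono (inter_subset_inter_right _ Ioo_subset_Icc_self))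
  have hAfin : volume A < ⊤ :=
    lt_of_le_of_lt (measure_mono (inter_subset_right)) (by rw [Real.volume_Icc]; exact ENNReal.ofReal_lt_top)
  -- rational points have measure 0
  have hQ : volume (Set.range ((↑) : ℚ → ℝ)) = 0 :=
    (Set.countable_range _).measure_zero _
  obtain ⟨U, hUQ, hUopen, hUmeas⟩ :=
    Set.exists_isOpen_lt_of_lt (μ := volume) (Set.range ((↑) : ℚ → ℝ)) (volume A)
      (by rw [hQ]; exact hApos)
  have hUdense : Dense U := by
    have : Dense (Set.range ((↑) : ℚ → ℝ)) := Rat.denseRange_cast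
    exact this.mono hUQ
  refine ⟨A \ U, ?_, ?_, ?_, ?_⟩
  · intro x hx
    exact ⟨hx.1.1, Icc_subset_Ioo h1 h3 hx.1.2⟩
  · exact (isCompact_Icc (a := a') (b := b')).of_isClosed_subset
      ((hF.inter isClosed_Icc).sdiff hUopen) (fun x hx => hx.1.2)
  · have hsub : closure (A \ U) ⊆ Uᶜ := by
      apply closure_minimal _ (hUopen.isClosed_compl)
      exact fun x hx => hx.2
    have : interior (closure (A \ U)) ⊆ interior Uᶜ := interior_mono hsub
    rw [interior_compl, hUdense.closure_eq, compl_univ] at this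
    exact eq_empty_of_subset_empty this
  · have : volume A ≤ volume (A \ U) + volume U := by
      calc volume A ≤ volume ((A \ U) ∪ U) := measure_mono (fun x hx => by
        by_cases h : x ∈ U
        · exact Or.inr h
        · exact Or.inl ⟨hx, h⟩)
      _ ≤ _ := measure_union_le _ _
    by_contra h
    push_neg at h
    simp only [nonpos_iff_eq_zero] at h
    rw [h, zero_add] at this
    exact absurd (lt_of_lt_of_le hUmeas this) (lt_irrefl _)
end

section
/- Let F ⊆ ℝ be closed, M ⊆ ℝ measurable with everywhere positive measure, and ε > 0. Then there exists a closed set H ⊆ ℝ such that F ⊆ H ⊆ (F ∪ M) ∩ (F)_ε, and H meets the middle third of every connected component of F̂^c ∩ (F)_ε in a set of positive Lebesgue measure. -/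
open Filter MeasureTheory Set Metric Topology

noncomputable def Sset : Set ℝ := insert 0 (Set.range fun n : ℕ => 1 / ((n : ℝ) + 1))

noncomputable def Wset (ε : ℝ) : Set ℝ := insert ε Sset

lemma exists_delta (ε d : ℝ) (hd : 0 < d) :
    ∃ δ : ℝ, 0 < δ ∧ δ ≤ d / 3 ∧ ∀ t ∈ Wset ε, |t - d| < δ → t = d := by
  classical
  obtain ⟨N, hN⟩ := exists_nat_gt (2 / d)
  set Wfin : Finset ℝ := insert 0 (insert ε (Finset.image (fun n : ℕ => 1 / ((n : ℝ) + 1)) (Finset.range N)))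
    with hWfin
  have h0 : (0 : ℝ) ∈ Wfin := by simp [hWfin]
  have hne : (Wfin.erase d).Nonempty := ⟨0, Finset.mem_erase.2 ⟨hd.ne, h0⟩⟩
  set δ0 := (Wfin.erase d).inf' hne fun t => |t - d| with hδ0def
  have hδ0 : 0 < δ0 := by
    rw [hδ0def, Finset.lt_inf'_iff]
    intro t ht
    exact abs_pos.2 (sub_ne_zero.2 (Finset.mem_erase.1 ht).1)
  refine ⟨min (d / 3) δ0, lt_min (by linarith) hδ0, min_le_left _ _, ?_⟩
  intro t ht hlt
  by_contra hne'
  by_cases hmem : t ∈ Wfin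
  · have h1 : δ0 ≤ |t - d| := Finset.inf'_le _ (Finset.mem_erase.2 ⟨hne', hmem⟩)
    have h2 := lt_of_lt_of_le hlt (min_le_right _ _)
    linarith
  · have ht2 : t < d / 2 := by
      rcases ht with rfl | rfl | ⟨n, hn0⟩
      · exact absurd (by simp [hWfin]) hmem
      · exact absurd h0 hmem
      · have hn : ¬ n < N := by
          intro h
          apply hmem
          rw [← hn0]
          simp only [hWfin, Finset.mem_insert, Finset.mem_image]
          exact Or.inr (Or.inr ⟨n, Finset.mem_range.2 h, rfl⟩)
        push_neg at hn
        have h3 : (2 : ℝ) / d < (n : ℝ) + 1 := by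
          have h4 : (N : ℝ) ≤ (n : ℝ) := Nat.cast_le.2 hn
          linarith
        have hd2 : (0 : ℝ) < 2 / d := by positivity
        rw [← hn0]
        simp only
        calc (1 : ℝ) / ((n : ℝ) + 1) < 1 / (2 / d) := one_div_lt_one_div_of_lt hd2 h3
          _ = d / 2 := by field_simp
    have habs : d / 2 < |t - d| := by
      rw [abs_sub_comm, abs_of_nonneg (by linarith)]
      linarith
    have h2 := lt_of_lt_of_le hlt (min_le_left _ _)
    linarith

lemma mem_Fhat_iff {F : Set ℝ} (hF : IsClosed F) (hFne : F.Nonempty) (x : ℝ) :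
    x ∈ Fhat F ↔ Metric.infDist x F ∈ Sset := by
  unfold Fhat Sset
  simp only [Set.mem_union, Set.mem_iUnion, Set.mem_setOf_eq, Set.mem_insert_iff, Set.mem_range]
  constructor
  · rintro (h | ⟨n, hn⟩)
    · exact Or.inl (Metric.infDist_zero_of_mem h)
    · exact Or.inr ⟨n, hn.symm⟩
  · rintro (h | ⟨n, hn⟩)
    · exact Or.inl ((hF.mem_iff_infDist_zero hFne).2 h)
    · exact Or.inr ⟨n, hn.symm⟩

lemma ball_inj {c r c' r' : ℝ} (hr : 0 < r) (h : Metric.ball c r = Metric.ball c' r') :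
    c = c' ∧ r = r' := by
  rw [Real.ball_eq_Ioo, Real.ball_eq_Ioo] at h
  have hr' : 0 < r' := by
    by_contra h'
    push_neg at h'
    have : Set.Ioo (c' - r') (c' + r') = (∅ : Set ℝ) := Set.Ioo_eq_empty (by
      intro hlt; linarith)
    rw [this] at h
    have : c ∈ Set.Ioo (c - r) (c + r) := by constructor <;> linarith
    rw [h] at this
    exact this
  have h1 := congrArg sInf h
  have h2 := congrArg sSup h
  rw [csInf_Ioo (by linarith), csInf_Ioo (by linarith)] at h1
  rw [csSup_Ioo (by linarith), csSup_Ioo (by linarith)] at h2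
  constructor <;> linarith

lemma infDist_lip {F : Set ℝ} (x y : ℝ) :
    |Metric.infDist y F - Metric.infDist x F| ≤ dist y x := by
  rw [abs_sub_le_iff]
  constructor
  · linarith [Metric.infDist_le_infDist_add_dist (x := y) (y := x) (s := F)]
  · have h := Metric.infDist_le_infDist_add_dist (x := x) (y := y) (s := F)
    rw [dist_comm] at h
    linarith

theorem exists_set_H (F M : Set ℝ) (hF : IsClosed F) (hM : MeasurableSet M)
    (hEPM : EPM M) (ε : ℝ) (hε : 0 < ε) :
    ∃ H : Set ℝ, IsClosed H ∧ F ⊆ H ∧ H ⊆ (F ∪ M) ∩ Metric.thickening ε F ∧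
      ∀ x ∈ (Fhat F)ᶜ ∩ Metric.thickening ε F, ∀ c r : ℝ, 0 < r →
        connectedComponentIn ((Fhat F)ᶜ ∩ Metric.thickening ε F) x = Metric.ball c r →
        0 < MeasureTheory.volume (H ∩ Metric.ball c (r / 3)) := by
  classical
  rcases F.eq_empty_or_nonempty with rfl | hFne
  · refine ⟨∅, isClosed_empty, Set.Subset.rfl, Set.empty_subset _, ?_⟩
    intro x hx
    rw [Metric.thickening_empty] at hx
    exact absurd hx.2 (Set.notMem_empty x)
  set U : Set ℝ := (Fhat F)ᶜ ∩ Metric.thickening ε F with hUdef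
  have hUmem : ∀ y : ℝ, y ∈ U ↔ Metric.infDist y F ∉ Sset ∧ Metric.infDist y F < ε := by
    intro y
    rw [hUdef, Set.mem_inter_iff, Set.mem_compl_iff, mem_Fhat_iff hF hFne,
      Metric.mem_thickening_iff_infDist_lt hFne]
  set T : Set (ℝ × ℝ) :=
    {p | 0 < p.2 ∧ ∃ z ∈ U, connectedComponentIn U z = Metric.ball p.1 p.2} with hTdef
  have hTmem : ∀ p : ℝ × ℝ, p ∈ T ↔
      (0 < p.2 ∧ ∃ z ∈ U, connectedComponentIn U z = Metric.ball p.1 p.2) := fun p => Iff.rfl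
  have hKex : ∀ p : ℝ × ℝ, p ∈ T → ∃ K : Set ℝ,
      K ⊆ M ∩ Metric.ball p.1 (p.2 / 3) ∧ IsCompact K ∧ 0 < volume K := by
    intro p hp
    obtain ⟨hr, z, hz, hcomp⟩ := (hTmem p).1 hp
    have hab : p.1 - p.2 / 3 < p.1 + p.2 / 3 := by linarith
    have hpos := hEPM _ _ hab
    have hmeas : MeasurableSet (M ∩ Set.Ioo (p.1 - p.2 / 3) (p.1 + p.2 / 3)) :=
      hM.inter measurableSet_Ioo
    have hfin : volume (M ∩ Set.Ioo (p.1 - p.2 / 3) (p.1 + p.2 / 3)) ≠ ⊤ :=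
      ne_top_of_le_ne_top measure_Ioo_lt_top.ne (measure_mono Set.inter_subset_right)
    obtain ⟨K, hKs, hKc, hKlt⟩ := hmeas.exists_isCompact_lt_add hfin hpos.ne'
    refine ⟨K, ?_, hKc, ?_⟩
    · rw [Real.ball_eq_Ioo]; exact hKs
    · by_contra h
      push_neg at h
      rw [le_zero_iff] at h
      rw [h, zero_add] at hKlt
      exact lt_irrefl _ hKlt
  choose! K hKsub hKcomp hKpos using hKex
  have hballT : ∀ p : ℝ × ℝ, p ∈ T → Metric.ball p.1 p.2 ⊆ U ∧
      ∀ y ∈ K p, connectedComponentIn U y = Metric.ball p.1 p.2 := by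
    intro p hp
    obtain ⟨hr, z, hz, hcomp⟩ := (hTmem p).1 hp
    have hsub : Metric.ball p.1 p.2 ⊆ U := hcomp ▸ connectedComponentIn_subset U z
    refine ⟨hsub, ?_⟩
    intro y hy
    have hy3 : y ∈ Metric.ball p.1 p.2 :=
      Metric.ball_subset_ball (by linarith) (hKsub p hp hy).2
    have hy4 : y ∈ connectedComponentIn U z := hcomp ▸ hy3
    exact (connectedComponentIn_eq hy4).symm.trans hcomp
  have hKU : ∀ p ∈ T, K p ⊆ U := by
    intro p hp y hy
    have hr := ((hTmem p).1 hp).1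
    exact (hballT p hp).1 (Metric.ball_subset_ball (by linarith) (hKsub p hp hy).2)
  set H : Set ℝ := F ∪ ⋃ p ∈ T, K p with hHdef
  have hTsame : ∀ p ∈ T, ∀ q ∈ T, ∀ y ∈ K p, ∀ z ∈ K q,
      connectedComponentIn U y = connectedComponentIn U z → p = q := by
    intro p hp q hq y hy z hz hyz
    have h1 := (hballT p hp).2 y hy
    have h2 := (hballT q hq).2 z hz
    rw [h1, h2] at hyz
    obtain ⟨hc, hr⟩ := ball_inj ((hTmem p).1 hp).1 hyz
    exact Prod.ext hc hr
  have hsamecomp : ∀ (A : Set ℝ), IsPreconnected A → A ⊆ U →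
      ∀ p ∈ T, ∀ q ∈ T, ∀ y ∈ K p, ∀ z ∈ K q, y ∈ A → z ∈ A → p = q := by
    intro A hA hAU p hp q hq y hy z hz hyA hzA
    have h1 : A ⊆ connectedComponentIn U y := hA.subset_connectedComponentIn hyA hAU
    exact hTsame p hp q hq y hy z hz (connectedComponentIn_eq (h1 hzA))
  have hclosed : IsClosed H := by
    apply isClosed_of_closure_subset
    intro x hx
    by_cases hxF : x ∈ F
    · exact Or.inl hxF
    have hd0 : 0 < Metric.infDist x F := by
      rcases lt_or_eq_of_le (Metric.infDist_nonneg (x := x) (s := F)) with h | h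
      · exact h
      · exact absurd ((hF.mem_iff_infDist_zero hFne).2 h.symm) hxF
    set d := Metric.infDist x F with hddef
    obtain ⟨δ, hδ0, hδd, hδW⟩ := exists_delta ε d hd0
    have hball : ∀ y ∈ Metric.ball x δ, |Metric.infDist y F - d| < δ := by
      intro y hy
      exact lt_of_le_of_lt (infDist_lip x y) (Metric.mem_ball.1 hy)
    have key : ∃ P : Set (ℝ × ℝ), P.Finite ∧
        ∀ p ∈ T, (K p ∩ Metric.ball x δ).Nonempty → p ∈ P := by
      by_cases hdW : d ∈ Wset ε
      · -- level set has at most two points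
        have hLR : ∀ y ∈ Metric.ball x δ, Metric.infDist y F = d →
            (∃ z ∈ F, z < y ∧ y - z = d) ∨ (∃ z ∈ F, y < z ∧ z - y = d) := by
          intro y hy hgy
          obtain ⟨z, hzF, hz⟩ := hF.exists_infDist_eq_dist hFne y
          have hzd : dist y z = d := by rw [← hz, hgy]
          rcases lt_trichotomy z y with h | h | h
          · refine Or.inl ⟨z, hzF, h, ?_⟩
            rw [Real.dist_eq, abs_of_pos (by linarith)] at hzd
            linarith
          · exfalso
            rw [h, dist_self] at hzd
            linarith
          · refine Or.inr ⟨z, hzF, h, ?_⟩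
            rw [Real.dist_eq, abs_of_neg (by linarith)] at hzd
            linarith
        have h2δ : 2 * δ < d := by linarith
        have hdist2 : ∀ y ∈ Metric.ball x δ, ∀ y' ∈ Metric.ball x δ, |y - y'| < 2 * δ := by
          intro y hy y' hy'
          rw [Metric.mem_ball, Real.dist_eq] at hy hy'
          rw [abs_lt] at hy hy' ⊢
          constructor <;> [linarith [hy.1, hy'.2]; linarith [hy.2, hy'.1]]
        have hmainL : ∀ a ∈ Metric.ball x δ, ∀ b ∈ Metric.ball x δ, a < b →
            Metric.infDist a F = d → (∃ z ∈ F, z < b ∧ b - z = d) → False := by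
          rintro a ha b hb hab hga ⟨z, hzF, hzb, hzd⟩
          have h3 : Metric.infDist a F ≤ dist a z := Metric.infDist_le_dist_of_mem hzF
          have hd2 := hdist2 a ha b hb
          rw [abs_lt] at hd2
          rw [Real.dist_eq, abs_of_pos (by linarith)] at h3
          rw [hga] at h3
          linarith
        have hmainR : ∀ a ∈ Metric.ball x δ, ∀ b ∈ Metric.ball x δ, a < b →
            Metric.infDist b F = d → (∃ z ∈ F, a < z ∧ z - a = d) → False := by
          rintro a ha b hb hab hgb ⟨z, hzF, hza, hzd⟩
          have h3 : Metric.infDist b F ≤ dist b z := Metric.infDist_le_dist_of_mem hzF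
          have hd2 := hdist2 a ha b hb
          rw [abs_lt] at hd2
          rw [Real.dist_eq, abs_of_neg (by linarith)] at h3
          rw [hgb] at h3
          linarith
        obtain ⟨pl, hpl1, hpl2⟩ : ∃ pl : ℝ,
            (pl = x - δ ∨ (pl ∈ Metric.ball x δ ∧ Metric.infDist pl F = d)) ∧
            ∀ y ∈ Metric.ball x δ, Metric.infDist y F = d →
              (∃ z ∈ F, z < y ∧ y - z = d) → y = pl := by
          by_cases hL1 : ∃ y, y ∈ Metric.ball x δ ∧ Metric.infDist y F = d ∧
              ∃ z ∈ F, z < y ∧ y - z = d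
          · obtain ⟨y0, hy0b, hy0g, hy0l⟩ := hL1
            refine ⟨y0, Or.inr ⟨hy0b, hy0g⟩, ?_⟩
            intro y hy hgy hl
            by_contra hne
            rcases lt_or_gt_of_ne hne with h | h
            · exact hmainL y hy y0 hy0b h hgy hy0l
            · exact hmainL y0 hy0b y hy h hy0g hl
          · exact ⟨x - δ, Or.inl rfl, fun y hy hgy hl => absurd ⟨y, hy, hgy, hl⟩ hL1⟩
        obtain ⟨pr, hpr1, hpr2⟩ : ∃ pr : ℝ,
            (pr = x - δ ∨ (pr ∈ Metric.ball x δ ∧ Metric.infDist pr F = d)) ∧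
            ∀ y ∈ Metric.ball x δ, Metric.infDist y F = d →
              (∃ z ∈ F, y < z ∧ z - y = d) → y = pr := by
          by_cases hL1 : ∃ y, y ∈ Metric.ball x δ ∧ Metric.infDist y F = d ∧
              ∃ z ∈ F, y < z ∧ z - y = d
          · obtain ⟨y0, hy0b, hy0g, hy0l⟩ := hL1
            refine ⟨y0, Or.inr ⟨hy0b, hy0g⟩, ?_⟩
            intro y hy hgy hl
            by_contra hne
            rcases lt_or_gt_of_ne hne with h | h
            · exact hmainR y hy y0 hy0b h hy0g hl
            · exact hmainR y0 hy0b y hy h hgy hy0l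
          · exact ⟨x - δ, Or.inl rfl, fun y hy hgy hl => absurd ⟨y, hy, hgy, hl⟩ hL1⟩
        set a := min pl pr with hadef
        set b := max pl pr with hbdef
        have hab : a ≤ b := min_le_max
        have hlevel : ∀ y ∈ Metric.ball x δ, Metric.infDist y F = d → y = pl ∨ y = pr := by
          intro y hy hgy
          rcases hLR y hy hgy with h | h
          · exact Or.inl (hpl2 y hy hgy h)
          · exact Or.inr (hpr2 y hy hgy h)
        have hUned : ∀ y ∈ Metric.ball x δ, y ∈ U → Metric.infDist y F ≠ d := by
          intro y hy hyU hgy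
          rcases (hUmem y).1 hyU with ⟨hS, hlt⟩
          rcases hdW with h | h
          · rw [hgy, h] at hlt
            exact lt_irrefl _ hlt
          · exact hS (by rw [hgy]; exact h)
        have hUnepq : ∀ y ∈ Metric.ball x δ, y ∈ U → y ≠ pl ∧ y ≠ pr := by
          intro y hy hyU
          constructor
          · intro he
            rcases hpl1 with h | ⟨hb', hg'⟩
            · rw [he, h] at hy
              rw [Metric.mem_ball, Real.dist_eq] at hy
              rw [abs_lt] at hy
              linarith [hy.1]
            · exact hUned y hy hyU (he ▸ hg')
          · intro he
            rcases hpr1 with h | ⟨hb', hg'⟩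
            · rw [he, h] at hy
              rw [Metric.mem_ball, Real.dist_eq] at hy
              rw [abs_lt] at hy
              linarith [hy.1]
            · exact hUned y hy hyU (he ▸ hg')
        -- the three intervals
        set J1 := Set.Ioo (x - δ) (min a (x + δ)) with hJ1def
        set J2 := Set.Ioo (max a (x - δ)) (min b (x + δ)) with hJ2def
        set J3 := Set.Ioo (max b (x - δ)) (x + δ) with hJ3def
        have hballIoo : Metric.ball x δ = Set.Ioo (x - δ) (x + δ) := Real.ball_eq_Ioo x δ
        have hJ1b : J1 ⊆ Metric.ball x δ := by
          rw [hballIoo]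
          intro y hy
          exact ⟨hy.1, lt_of_lt_of_le hy.2 (min_le_right _ _)⟩
        have hJ2b : J2 ⊆ Metric.ball x δ := by
          rw [hballIoo]
          intro y hy
          exact ⟨lt_of_le_of_lt (le_max_right _ _) hy.1,
            lt_of_lt_of_le hy.2 (min_le_right _ _)⟩
        have hJ3b : J3 ⊆ Metric.ball x δ := by
          rw [hballIoo]
          intro y hy
          exact ⟨lt_of_le_of_lt (le_max_right _ _) hy.1, hy.2⟩
        have hplab : pl = a ∨ pl = b := by
          rcases le_total pl pr with h | h
          · exact Or.inl (min_eq_left h).symm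
          · exact Or.inr (max_eq_left h).symm
        have hprab : pr = a ∨ pr = b := by
          rcases le_total pl pr with h | h
          · exact Or.inr (max_eq_right h).symm
          · exact Or.inl (min_eq_right h).symm
        have hJ1d : ∀ w ∈ J1, Metric.infDist w F ≠ d := by
          intro w hw hgw
          have hwb := hJ1b hw
          have h1 : w < a := lt_of_lt_of_le hw.2 (min_le_left _ _)
          rcases hlevel w hwb hgw with h | h
          · rcases hplab with h' | h' <;> [exact absurd (h.trans h') (ne_of_lt h1);
              exact absurd (h.trans h') (ne_of_lt (lt_of_lt_of_le h1 hab))]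
          · rcases hprab with h' | h' <;> [exact absurd (h.trans h') (ne_of_lt h1);
              exact absurd (h.trans h') (ne_of_lt (lt_of_lt_of_le h1 hab))]
        have hJ2d : ∀ w ∈ J2, Metric.infDist w F ≠ d := by
          intro w hw hgw
          have hwb := hJ2b hw
          have h1 : a < w := lt_of_le_of_lt (le_max_left _ _) hw.1
          have h2 : w < b := lt_of_lt_of_le hw.2 (min_le_left _ _)
          rcases hlevel w hwb hgw with h | h
          · rcases hplab with h' | h' <;> [exact absurd (h.trans h') (ne_of_gt h1);
              exact absurd (h.trans h') (ne_of_lt h2)]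
          · rcases hprab with h' | h' <;> [exact absurd (h.trans h') (ne_of_gt h1);
              exact absurd (h.trans h') (ne_of_lt h2)]
        have hJ3d : ∀ w ∈ J3, Metric.infDist w F ≠ d := by
          intro w hw hgw
          have hwb := hJ3b hw
          have h1 : b < w := lt_of_le_of_lt (le_max_left _ _) hw.1
          rcases hlevel w hwb hgw with h | h
          · rcases hplab with h' | h' <;> [exact absurd (h.trans h') (ne_of_gt (lt_of_le_of_lt hab h1));
              exact absurd (h.trans h') (ne_of_gt h1)]
          · rcases hprab with h' | h' <;> [exact absurd (h.trans h') (ne_of_gt (lt_of_le_of_lt hab h1));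
              exact absurd (h.trans h') (ne_of_gt h1)]
        have hcover : ∀ y ∈ Metric.ball x δ, y ∈ U → y ∈ J1 ∪ J2 ∪ J3 := by
          intro y hy hyU
          obtain ⟨hnl, hnr⟩ := hUnepq y hy hyU
          have hna : y ≠ a := by
            rcases le_total pl pr with h | h
            · rw [hadef, min_eq_left h]; exact hnl
            · rw [hadef, min_eq_right h]; exact hnr
          have hnb : y ≠ b := by
            rcases le_total pl pr with h | h
            · rw [hbdef, max_eq_right h]; exact hnr
            · rw [hbdef, max_eq_left h]; exact hnl
          rw [hballIoo] at hy
          rcases lt_trichotomy y a with h | h | h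
          · exact Or.inl (Or.inl ⟨hy.1, lt_min h hy.2⟩)
          · exact absurd h hna
          · rcases lt_trichotomy y b with h' | h' | h'
            · exact Or.inl (Or.inr ⟨max_lt_iff.2 ⟨h, hy.1⟩, lt_min h' hy.2⟩)
            · exact absurd h' hnb
            · exact Or.inr ⟨max_lt_iff.2 ⟨h', hy.1⟩, hy.2⟩
        have hsame : ∀ l u : ℝ, Set.Ioo l u ⊆ Metric.ball x δ →
            (∀ w ∈ Set.Ioo l u, Metric.infDist w F ≠ d) →
            ∀ y ∈ Set.Ioo l u, y ∈ U → ∀ z ∈ Set.Ioo l u, z ∈ U := by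
          intro l u hsb hnd y hy hyU z hz
          have hgz1 : |Metric.infDist z F - d| < δ := hball z (hsb hz)
          have hgz2 : Metric.infDist z F ≠ d := hnd z hz
          have hgzS : Metric.infDist z F ∉ Sset := fun h =>
            hgz2 (hδW _ (Set.mem_insert_of_mem _ h) hgz1)
          have hgze : Metric.infDist z F < ε := by
            by_contra hge
            push_neg at hge
            have hgne : Metric.infDist z F ≠ ε := by
              intro h
              rw [h] at hgz1
              exact hgz2 (h.trans (hδW ε (Set.mem_insert _ _) hgz1))
            have hlt : ε < Metric.infDist z F := lt_of_le_of_ne hge (Ne.symm hgne)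
            have hylt : Metric.infDist y F < ε := ((hUmem y).1 hyU).2
            have hIcc : Set.uIcc y z ⊆ Set.Ioo l u := Set.ordConnected_Ioo.uIcc_subset hy hz
            have hcont : ContinuousOn (fun w => Metric.infDist w F) (Set.uIcc y z) :=
              (Metric.continuous_infDist_pt F).continuousOn
            have hmemε : ε ∈ Set.uIcc (Metric.infDist y F) (Metric.infDist z F) := by
              rw [Set.mem_uIcc]
              exact Or.inl ⟨le_of_lt hylt, le_of_lt hlt⟩
            obtain ⟨w, hw, hwε⟩ := intermediate_value_uIcc hcont hmemε
            have hwε' : Metric.infDist w F = ε := hwε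
            have hw2 : |ε - d| < δ := by
              have h5 := hball w (hsb (hIcc hw))
              rwa [hwε'] at h5
            have hεd : ε = d := hδW ε (Set.mem_insert _ _) hw2
            exact hnd w (hIcc hw) (hwε'.trans hεd)
          exact (hUmem z).2 ⟨hgzS, hgze⟩
        have hQ : ∀ l u : ℝ, Set.Ioo l u ⊆ Metric.ball x δ →
            (∀ w ∈ Set.Ioo l u, Metric.infDist w F ≠ d) →
            {p : ℝ × ℝ | p ∈ T ∧ (K p ∩ Set.Ioo l u).Nonempty}.Subsingleton := by
          intro l u hsb hnd p hp q hq
          simp only [Set.mem_setOf_eq] at hp hq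
          obtain ⟨hpT, y, hyK, hyJ⟩ := hp
          obtain ⟨hqT, z, hzK, hzJ⟩ := hq
          have hyU : y ∈ U := hKU p hpT hyK
          have hJU : Set.Ioo l u ⊆ U := fun w hw => hsame l u hsb hnd y hyJ hyU w hw
          exact hsamecomp (Set.Ioo l u) isPreconnected_Ioo hJU p hpT q hqT y hyK z hzK hyJ hzJ
        refine ⟨{p : ℝ × ℝ | p ∈ T ∧ (K p ∩ J1).Nonempty} ∪
          {p : ℝ × ℝ | p ∈ T ∧ (K p ∩ J2).Nonempty} ∪
          {p : ℝ × ℝ | p ∈ T ∧ (K p ∩ J3).Nonempty}, ?_, ?_⟩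
        · exact (((hQ _ _ hJ1b hJ1d).finite.union ((hQ _ _ hJ2b hJ2d).finite)).union
            ((hQ _ _ hJ3b hJ3d).finite))
        · rintro p hp ⟨y, hyK, hyb⟩
          have hyU := hKU p hp hyK
          rcases hcover y hyb hyU with (h | h) | h
          · exact Or.inl (Or.inl ⟨hp, y, hyK, h⟩)
          · exact Or.inl (Or.inr ⟨hp, y, hyK, h⟩)
          · exact Or.inr ⟨hp, y, hyK, h⟩
      · -- d is not a critical value
        by_cases hcase : ε ≤ d - δ
        · refine ⟨∅, Set.finite_empty, ?_⟩
          rintro p hp ⟨y, hyK, hyb⟩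
          have hyU := hKU p hp hyK
          have h1 := hball y hyb
          have h2 : Metric.infDist y F < ε := ((hUmem y).1 hyU).2
          rw [abs_lt] at h1
          linarith [h1.1]
        · push_neg at hcase
          have hεd : d + δ ≤ ε := by
            by_contra hlt
            push_neg at hlt
            have habs : |ε - d| < δ := by rw [abs_lt]; constructor <;> linarith
            exact hdW ((hδW ε (Set.mem_insert _ _) habs) ▸ Set.mem_insert _ _)
          have hballU : ∀ y ∈ Metric.ball x δ, y ∈ U := by
            intro y hy
            have h1 := hball y hy
            rw [abs_lt] at h1
            refine (hUmem y).2 ⟨?_, by linarith [h1.2]⟩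
            intro hS
            have h2 : Metric.infDist y F = d :=
              hδW _ (Set.mem_insert_of_mem _ hS) (by rw [abs_lt]; exact h1)
            exact hdW (Set.mem_insert_of_mem _ (h2 ▸ hS))
          refine ⟨{p : ℝ × ℝ | p ∈ T ∧ (K p ∩ Metric.ball x δ).Nonempty}, ?_,
            fun p hp h => ⟨hp, h⟩⟩
          apply Set.Subsingleton.finite
          intro p hp q hq
          simp only [Set.mem_setOf_eq] at hp hq
          obtain ⟨hpT, y, hyK, hyb⟩ := hp
          obtain ⟨hqT, z, hzK, hzb⟩ := hq
          have hpre : IsPreconnected (Metric.ball x δ) := by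
            rw [Real.ball_eq_Ioo]; exact isPreconnected_Ioo
          exact hsamecomp _ hpre (fun w hw => hballU w hw) p hpT q hqT y hyK z hzK hyb hzb
    obtain ⟨P, hPfin, hPT⟩ := key
    have hCclosed : IsClosed (F ∪ ⋃ p ∈ P ∩ T, K p) :=
      hF.union ((hPfin.inter_of_left T).isClosed_biUnion
        (fun p hp => (hKcomp p hp.2).isClosed))
    have hsub2 : H ∩ Metric.ball x δ ⊆ F ∪ ⋃ p ∈ P ∩ T, K p := by
      rintro y ⟨hy1, hy2⟩
      rcases hy1 with hy1 | hy1
      · exact Or.inl hy1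
      · obtain ⟨p, hp, hyp⟩ := Set.mem_iUnion₂.1 hy1
        exact Or.inr (Set.mem_iUnion₂.2 ⟨p, ⟨hPT p hp ⟨y, hyp, hy2⟩, hp⟩, hyp⟩)
    have hx2 : x ∈ closure (H ∩ Metric.ball x δ) := by
      rw [_root_.mem_closure_iff] at hx ⊢
      intro o ho hxo
      obtain ⟨y, hy1, hy2⟩ := hx (o ∩ Metric.ball x δ) (ho.inter Metric.isOpen_ball)
        ⟨hxo, Metric.mem_ball_self hδ0⟩
      exact ⟨y, hy1.1, hy2, hy1.2⟩
    have hx3 := closure_mono hsub2 hx2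
    rw [hCclosed.closure_eq] at hx3
    rcases hx3 with h | h
    · exact Or.inl h
    · obtain ⟨p, hp, hyp⟩ := Set.mem_iUnion₂.1 h
      exact Or.inr (Set.mem_iUnion₂.2 ⟨p, hp.2, hyp⟩)
  refine ⟨H, hclosed, Set.subset_union_left, ?_, ?_⟩
  · rintro y (hy | hy)
    · exact ⟨Or.inl hy, Metric.self_subset_thickening hε F hy⟩
    · obtain ⟨p, hp, hyp⟩ := Set.mem_iUnion₂.1 hy
      refine ⟨Or.inr (hKsub p hp hyp).1, ?_⟩
      exact (hKU p hp hyp).2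
  · intro x hx c r hr hcomp
    have hpT : (c, r) ∈ T := (hTmem (c, r)).2 ⟨hr, x, hx, hcomp⟩
    have hKH : K (c, r) ⊆ H ∩ Metric.ball c (r / 3) := by
      intro y hy
      exact ⟨Or.inr (Set.mem_iUnion₂.2 ⟨(c, r), hpT, hy⟩), (hKsub _ hpT hy).2⟩
    calc (0 : ENNReal) < volume (K (c, r)) := hKpos _ hpT
      _ ≤ volume (H ∩ Metric.ball c (r / 3)) := measure_mono hKH
end

section
/- Suppose A ⊆ ℝ is F_{σδ}, meagre, and Lebesgue null. Then there exist nonempty compact sets F_k ⊆ ℝ (k ∈ ℕ) such that: for all k > l, if F_k ∩ F_l ≠ ∅ then F_k ⊆ F_l; and A = ⋂_{N∈ℕ} ⋃_{k≥N} F_k (i.e., A is exactly the set of points belonging to infinitely many F_k). -/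
open Filter MeasureTheory Set Metric Topology

namespace SuslinAux


lemma interior_union_eq_empty {s t : Set ℝ} (hs : IsClosed s)
    (h1 : interior s = ∅) (h2 : interior t = ∅) : interior (s ∪ t) = ∅ := by
  have hsubt : interior (s ∪ t) ∩ sᶜ ⊆ t := by
    intro x hx
    rcases interior_subset hx.1 with h | h
    · exact absurd h hx.2
    · exact h
  have hopen : IsOpen (interior (s ∪ t) ∩ sᶜ) := isOpen_interior.inter hs.isOpen_compl
  have h3 : interior (s ∪ t) ∩ sᶜ ⊆ interior t := hopen.subset_interior_iff.mpr hsubt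
  have h4 : interior (s ∪ t) ⊆ s := by
    intro x hx
    by_contra hxs
    exact absurd (h3 ⟨hx, hxs⟩) (by simp [h2])
  have h5 : interior (s ∪ t) ⊆ interior s := isOpen_interior.subset_interior_iff.mpr h4
  rw [h1] at h5
  exact eq_empty_of_subset_empty h5

lemma cutpoint {K : Set ℝ} (hKi : interior K = ∅) {a b : ℝ} (hab : a < b) :
    ∃ c, c ∈ Ioo a b ∧ c ∉ K := by
  by_contra h
  push_neg at h
  have hsub : Ioo a b ⊆ K := fun c hc => h c hc
  have : Ioo a b ⊆ interior K := isOpen_Ioo.subset_interior_iff.mpr hsub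
  rw [hKi] at this
  exact absurd (this (nonempty_Ioo.mpr hab).choose_spec) (by simp)

lemma frontier_finset_biUnion (t : Finset ℝ) (u : ℝ → Set ℝ) :
    frontier (⋃ y ∈ t, u y) ⊆ ⋃ y ∈ t, frontier (u y) := by
  classical
  induction t using Finset.induction_on with
  | empty => simp
  | @insert a s ha ih =>
    have h1 : (⋃ y ∈ insert a s, u y) = u a ∪ ⋃ y ∈ (s : Finset ℝ), u y := by
      simp [Set.biUnion_insert]
    rw [h1]
    refine (frontier_union_subset _ _).trans ?_
    intro x hx
    rcases hx with hx | hx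
    · exact Set.mem_biUnion (Finset.mem_insert_self a s) hx.1
    · have h3 := ih hx.2
      simp only [Set.mem_iUnion] at h3 ⊢
      obtain ⟨y, hy, hxy⟩ := h3
      exact ⟨y, Finset.mem_insert_of_mem hy, hxy⟩

lemma frontier_finset_biInter (t : Finset ℕ) (u : ℕ → Set ℝ) :
    frontier (⋂ y ∈ t, u y) ⊆ ⋃ y ∈ t, frontier (u y) := by
  classical
  induction t using Finset.induction_on with
  | empty => simp
  | @insert a s ha ih =>
    have h1 : (⋂ y ∈ insert a s, u y) = u a ∩ ⋂ y ∈ (s : Finset ℕ), u y := by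
      simp [Set.biInter_insert]
    rw [h1]
    have h2 := frontier_inter_subset (u a) (⋂ y ∈ (s : Finset ℕ), u y)
    refine h2.trans ?_
    intro x hx
    rcases hx with hx | hx
    · exact Set.mem_biUnion (Finset.mem_insert_self a s) hx.1
    · have h3 := ih hx.2
      simp only [Set.mem_iUnion] at h3 ⊢
      obtain ⟨y, hy, hxy⟩ := h3
      exact ⟨y, Finset.mem_insert_of_mem hy, hxy⟩

/-- An open set `W` around the compact `C'` whose frontier avoids `K`,
contained in the `δ`-neighbourhood of `C'`. -/
lemma exists_W {K : Set ℝ} (hKi : interior K = ∅) {C' : Set ℝ} (hC'c : IsCompact C')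
    {δ : ℝ} (hδ : 0 < δ) :
    ∃ W : Set ℝ, IsOpen W ∧ C' ⊆ W ∧ frontier W ∩ K = ∅ ∧
      W ⊆ ⋃ y ∈ C', Metric.ball y δ := by
  have hhalf : 0 < δ / 2 := by linarith
  -- choice of endpoints
  have hg1 : ∀ y : ℝ, ∃ c, c ∈ Ioo (y - δ/2) y ∧ c ∉ K :=
    fun y => cutpoint hKi (by linarith)
  have hg2 : ∀ y : ℝ, ∃ c, c ∈ Ioo y (y + δ/2) ∧ c ∉ K :=
    fun y => cutpoint hKi (by linarith)
  choose g1 hg1a hg1b using hg1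
  choose g2 hg2a hg2b using hg2
  have hcov : C' ⊆ ⋃ y ∈ C', Ioo (g1 y) (g2 y) := by
    intro y hy
    exact Set.mem_biUnion hy ⟨(hg1a y).2, (hg2a y).1⟩
  obtain ⟨b', hb'sub, hb'fin, hb'cov⟩ :=
    hC'c.elim_finite_subcover_image (fun y _ => isOpen_Ioo) hcov
  classical
  set t : Finset ℝ := hb'fin.toFinset with ht
  have htb : ∀ y, y ∈ t ↔ y ∈ b' := fun y => hb'fin.mem_toFinset
  refine ⟨⋃ y ∈ t, Ioo (g1 y) (g2 y), isOpen_biUnion (fun _ _ => isOpen_Ioo), ?_, ?_, ?_⟩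
  · intro x hx
    obtain ⟨y, hy, hxy⟩ := Set.mem_iUnion₂.mp (hb'cov hx)
    exact Set.mem_biUnion ((htb y).mpr hy) hxy
  · have h1 := frontier_finset_biUnion t (fun y => Ioo (g1 y) (g2 y))
    rw [Set.eq_empty_iff_forall_notMem]
    rintro x ⟨hx1, hx2⟩
    obtain ⟨y, hy, hxy⟩ := Set.mem_iUnion₂.mp (h1 hx1)
    have hlt : g1 y < g2 y := lt_trans (hg1a y).2 (hg2a y).1
    rw [frontier_Ioo hlt] at hxy
    rcases hxy with h | h
    · rw [h] at hx2; exact hg1b y hx2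
    · rw [Set.mem_singleton_iff] at h; rw [h] at hx2; exact hg2b y hx2
  · intro x hx
    obtain ⟨y, hy, hxy⟩ := Set.mem_iUnion₂.mp hx
    have hyC : y ∈ C' := hb'sub ((htb y).mp hy)
    refine Set.mem_biUnion hyC ?_
    have h1 := (hg1a y).1
    have h2 := (hg2a y).2
    rw [Metric.mem_ball, Real.dist_eq, abs_lt]
    obtain ⟨ha, hb⟩ := hxy
    constructor <;> nlinarith [ha, hb]

/-- Splitting a compact nowhere dense set minus a closed subset into countably many
pairwise disjoint compact pieces. -/
lemma exists_split (K C' : Set ℝ) (h1 : IsCompact K) (h2 : interior K = ∅)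
    (h3 : IsClosed C') (h4 : C' ⊆ K) :
    ∃ P : ℕ → Set ℝ,
      (∀ j, IsCompact (P j) ∧ P j ⊆ K ∧ P j ∩ C' = ∅) ∧
      (∀ j j', j ≠ j' → P j ∩ P j' = ∅) ∧
      (⋃ j, P j) = K \ C' := by
  have hC'c : IsCompact C' := h1.of_isClosed_subset h3 h4
  have hW : ∀ j : ℕ, ∃ W : Set ℝ, IsOpen W ∧ C' ⊆ W ∧ frontier W ∩ K = ∅ ∧
      W ⊆ ⋃ y ∈ C', Metric.ball y ((1/2 : ℝ)^j) :=
    fun j => exists_W h2 hC'c (by positivity)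
  choose W hWopen hWC' hWfr hWball using hW
  set V : ℕ → Set ℝ := fun j => ⋂ i ∈ Finset.range j, W i with hV
  have hVopen : ∀ j, IsOpen (V j) := fun j =>
    isOpen_biInter_finset (fun i _ => hWopen i)
  have hVmono : ∀ {j j'}, j ≤ j' → V j' ⊆ V j := by
    intro j j' hjj x hx
    simp only [hV, Set.mem_iInter, Finset.mem_range] at hx ⊢
    intro i hi
    exact hx i (by omega)
  have hVC' : ∀ j, C' ⊆ V j := fun j => Set.subset_iInter₂ (fun i _ => hWC' i)
  have hV0 : V 0 = Set.univ := by simp [hV]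
  have hKV : ∀ j, K ∩ closure (V j) ⊆ V j := by
    intro j x hx
    by_cases hxV : x ∈ V j
    · exact hxV
    · exfalso
      have hfr : x ∈ frontier (V j) := by
        rw [frontier, (hVopen j).interior_eq]
        exact ⟨hx.2, hxV⟩
      have h7 := frontier_finset_biInter (Finset.range j) W hfr
      obtain ⟨i, hi, hxi⟩ := Set.mem_iUnion₂.mp h7
      have h6 := hWfr i
      rw [Set.eq_empty_iff_forall_notMem] at h6
      exact h6 x ⟨hxi, hx.1⟩
  set P : ℕ → Set ℝ := fun j => (K ∩ closure (V j)) ∩ (V (j+1))ᶜ with hP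
  have hPK : ∀ j, P j ⊆ K := fun j x hx => hx.1.1
  have hPC' : ∀ j, P j ∩ C' = ∅ := by
    intro j
    rw [Set.eq_empty_iff_forall_notMem]
    rintro x ⟨hx1, hx2⟩
    exact hx1.2 (hVC' (j+1) hx2)
  have hPcomp : ∀ j, IsCompact (P j) :=
    fun j => ((h1.inter_right isClosed_closure).inter_right (hVopen (j+1)).isClosed_compl)
  have hdisj : ∀ {a b}, a < b → P a ∩ P b = ∅ := by
    intro a b hab
    rw [Set.eq_empty_iff_forall_notMem]
    rintro x ⟨hxa, hxb⟩
    have hx1 : x ∈ V b := hKV b ⟨hxb.1.1, hxb.1.2⟩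
    have hx2 : x ∈ V (a+1) := hVmono (by omega) hx1
    exact hxa.2 hx2
  refine ⟨P, fun j => ⟨hPcomp j, hPK j, hPC' j⟩, ?_, ?_⟩
  · intro j j' hjj
    rcases hjj.lt_or_gt with h | h
    · exact hdisj h
    · rw [Set.inter_comm]; exact hdisj h
  · apply Set.eq_of_subset_of_subset
    · intro x hx
      obtain ⟨j, hj⟩ := Set.mem_iUnion.mp hx
      refine ⟨hPK j hj, ?_⟩
      intro hxC
      have h8 := hPC' j
      rw [Set.eq_empty_iff_forall_notMem] at h8
      exact h8 x ⟨hj, hxC⟩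
    · rintro x ⟨hxK, hxC⟩
      have hEx : ∃ j, x ∉ V j := by
        by_cases hne : C'.Nonempty
        · have hd : 0 < infDist x C' := by
            rw [← hC'c.isClosed.notMem_iff_infDist_pos hne] at *
            exact hxC
          obtain ⟨j, hj⟩ := exists_pow_lt_of_lt_one hd (by norm_num : (1/2:ℝ) < 1)
          refine ⟨j + 1, fun hxV => ?_⟩
          have hxW : x ∈ W j := by
            have := hxV
            simp only [hV, Set.mem_iInter] at this
            exact this j (Finset.mem_range.mpr (by omega))
          obtain ⟨y, hy, hxy⟩ := Set.mem_iUnion₂.mp (hWball j hxW)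
          have h5 : infDist x C' ≤ dist x y := Metric.infDist_le_dist_of_mem hy
          rw [Metric.mem_ball] at hxy
          linarith
        · rw [Set.not_nonempty_iff_eq_empty] at hne
          refine ⟨1, fun hxV => ?_⟩
          have hxW : x ∈ W 0 := by
            simp only [hV, Set.mem_iInter] at hxV
            exact hxV 0 (Finset.mem_range.mpr (by omega))
          have := hWball 0 hxW
          simp [hne] at this
      classical
      have hfind := Nat.find_spec hEx
      set j0 := Nat.find hEx with hj0
      have hj0ne : j0 ≠ 0 := by
        intro h
        rw [h, hV0] at hfind
        exact hfind (Set.mem_univ x)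
      obtain ⟨j, hj⟩ := Nat.exists_eq_succ_of_ne_zero hj0ne
      have hxVj : x ∈ V j := by
        by_contra hc
        have := Nat.find_min' hEx hc
        omega
      refine Set.mem_iUnion.mpr ⟨j, ⟨⟨hxK, subset_closure hxVj⟩, ?_⟩⟩
      rw [← Nat.succ_eq_add_one, ← hj]
      exact hfind

open Classical in
noncomputable def splitP (K C' : Set ℝ) : ℕ → Set ℝ :=
  if h : IsCompact K ∧ interior K = ∅ ∧ IsClosed C' ∧ C' ⊆ K then
    Classical.choose (exists_split K C' h.1 h.2.1 h.2.2.1 h.2.2.2)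
  else fun _ => ∅

lemma splitP_spec {K C' : Set ℝ} (h1 : IsCompact K) (h2 : interior K = ∅)
    (h3 : IsClosed C') (h4 : C' ⊆ K) :
    (∀ j, IsCompact (splitP K C' j) ∧ splitP K C' j ⊆ K ∧ splitP K C' j ∩ C' = ∅) ∧
    (∀ j j', j ≠ j' → splitP K C' j ∩ splitP K C' j' = ∅) ∧
    (⋃ j, splitP K C' j) = K \ C' := by
  have h : IsCompact K ∧ interior K = ∅ ∧ IsClosed C' ∧ C' ⊆ K := ⟨h1, h2, h3, h4⟩
  rw [splitP, dif_pos h]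
  exact Classical.choose_spec (exists_split K C' h.1 h.2.1 h.2.2.1 h.2.2.2)

/-! ### Path coding -/

def codeL : List (ℕ × ℕ) → ℕ
  | [] => 0
  | p :: t => Nat.pair (codeL t) (Nat.pair p.1 p.2) + 1

def decodeL : ℕ → List (ℕ × ℕ)
  | 0 => []
  | (k+1) => Nat.unpair (Nat.unpair k).2 :: decodeL (Nat.unpair k).1
  decreasing_by exact Nat.lt_succ_of_le (Nat.unpair_left_le k)

lemma decode_code : ∀ s, decodeL (codeL s) = s := by
  intro s
  induction s with
  | nil => simp [codeL, decodeL]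
  | cons p t ih =>
    show decodeL (Nat.pair (codeL t) (Nat.pair p.1 p.2) + 1) = p :: t
    rw [decodeL]
    simp [Nat.unpair_pair, ih]

lemma code_decode : ∀ k, codeL (decodeL k) = k := by
  intro k
  induction k using Nat.strong_induction_on with
  | _ k ih =>
    match k with
    | 0 => simp [decodeL, codeL]
    | (k+1) =>
      have h1 : (Nat.unpair k).1 < k + 1 := Nat.lt_succ_of_le (Nat.unpair_left_le k)
      rw [decodeL]
      show Nat.pair (codeL (decodeL (Nat.unpair k).1)) _ + 1 = k + 1
      rw [ih _ h1]
      simp [Nat.pair_unpair]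

lemma codeL_inj {s t : List (ℕ × ℕ)} (h : codeL s = codeL t) : s = t := by
  rw [← decode_code s, h, decode_code]

lemma length_le_codeL : ∀ s : List (ℕ × ℕ), s.length ≤ codeL s := by
  intro s
  induction s with
  | nil => simp [codeL]
  | cons p t ih =>
    show t.length + 1 ≤ Nat.pair (codeL t) (Nat.pair p.1 p.2) + 1
    have := Nat.left_le_pair (codeL t) (Nat.pair p.1 p.2)
    omega

lemma codeL_le_of_suffix : ∀ {s t : List (ℕ × ℕ)}, s <:+ t → codeL s ≤ codeL t := by
  intro s t h
  induction t with
  | nil => rw [List.suffix_nil.mp h]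
  | cons p t ih =>
    rcases List.suffix_cons_iff.mp h with h | h
    · rw [h]
    · have h2 := ih h
      have h3 := Nat.left_le_pair (codeL t) (Nat.pair p.1 p.2)
      show codeL s ≤ Nat.pair (codeL t) (Nat.pair p.1 p.2) + 1
      omega

/-! ### The tree of compact sets -/

noncomputable def nodeE (C : ℕ → ℕ → Set ℝ) : List (ℕ × ℕ) → Set ℝ
  | [] => Set.univ
  | p :: t => splitP (nodeE C t ∩ C t.length (p.1+1)) (nodeE C t ∩ C t.length p.1) p.2


section NodeLemmas

variable {C : ℕ → ℕ → Set ℝ}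
variable (hC1 : ∀ n m, IsCompact (C n m)) (hC2 : ∀ n m, interior (C n m) = ∅)
  (hC3 : ∀ n m, C n m ⊆ C n (m+1))

include hC1 hC2 hC3

lemma Cmono (n : ℕ) : ∀ {m m'}, m ≤ m' → C n m ⊆ C n m' := by
  intro m m' h
  induction m' with
  | zero => rw [Nat.le_zero.mp h]
  | succ m' ih =>
    rcases Nat.lt_succ_iff_lt_or_eq.mp (Nat.lt_succ_of_le h) with h' | h'
    · exact (ih (by omega)).trans (hC3 n m')
    · rw [h']

lemma node_hyps {E : Set ℝ} (hE : IsClosed E) (n m : ℕ) :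
    IsCompact (E ∩ C n (m+1)) ∧ interior (E ∩ C n (m+1)) = ∅ ∧
    IsClosed (E ∩ C n m) ∧ E ∩ C n m ⊆ E ∩ C n (m+1) := by
  refine ⟨(hC1 n (m+1)).inter_left hE, ?_, hE.inter (hC1 n m).isClosed, ?_⟩
  · apply eq_empty_of_subset_empty
    calc interior (E ∩ C n (m+1)) ⊆ interior (C n (m+1)) :=
          interior_mono Set.inter_subset_right
      _ = ∅ := hC2 n (m+1)
  · exact fun x hx => ⟨hx.1, hC3 n m hx.2⟩

lemma nodeE_closed : ∀ s : List (ℕ × ℕ), IsClosed (nodeE C s) := by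
  intro s
  induction s with
  | nil => exact isClosed_univ
  | cons p t ih =>
    obtain ⟨h1, h2, h3, h4⟩ := node_hyps hC1 hC2 hC3 ih t.length p.1
    exact ((splitP_spec h1 h2 h3 h4).1 p.2).1.isClosed

lemma nodeE_step_spec (t : List (ℕ × ℕ)) (m : ℕ) :
    (∀ j, IsCompact (splitP (nodeE C t ∩ C t.length (m+1)) (nodeE C t ∩ C t.length m) j) ∧
      splitP (nodeE C t ∩ C t.length (m+1)) (nodeE C t ∩ C t.length m) j ⊆
        (nodeE C t ∩ C t.length (m+1)) ∧
      splitP (nodeE C t ∩ C t.length (m+1)) (nodeE C t ∩ C t.length m) j ∩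
        (nodeE C t ∩ C t.length m) = ∅) ∧
    (∀ j j', j ≠ j' →
      splitP (nodeE C t ∩ C t.length (m+1)) (nodeE C t ∩ C t.length m) j ∩
      splitP (nodeE C t ∩ C t.length (m+1)) (nodeE C t ∩ C t.length m) j' = ∅) ∧
    (⋃ j, splitP (nodeE C t ∩ C t.length (m+1)) (nodeE C t ∩ C t.length m) j) =
      (nodeE C t ∩ C t.length (m+1)) \ (nodeE C t ∩ C t.length m) := by
  obtain ⟨h1, h2, h3, h4⟩ := node_hyps hC1 hC2 hC3 (nodeE_closed hC1 hC2 hC3 t) t.length m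
  exact splitP_spec h1 h2 h3 h4

lemma nodeE_compact {s : List (ℕ × ℕ)} (hs : s ≠ []) : IsCompact (nodeE C s) := by
  match s with
  | p :: t => exact ((nodeE_step_spec hC1 hC2 hC3 t p.1).1 p.2).1

lemma nodeE_cons_subset (p : ℕ × ℕ) (t : List (ℕ × ℕ)) :
    nodeE C (p :: t) ⊆ nodeE C t ∩ C t.length (p.1+1) :=
  ((nodeE_step_spec hC1 hC2 hC3 t p.1).1 p.2).2.1

lemma nodeE_cons_disj_lower (p : ℕ × ℕ) (t : List (ℕ × ℕ)) :
    nodeE C (p :: t) ∩ C t.length p.1 = ∅ := by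
  have h1 := ((nodeE_step_spec hC1 hC2 hC3 t p.1).1 p.2).2.2
  have h2 := nodeE_cons_subset hC1 hC2 hC3 p t
  rw [Set.eq_empty_iff_forall_notMem] at h1 ⊢
  intro x hx
  exact h1 x ⟨hx.1, (h2 hx.1).1, hx.2⟩

lemma nodeE_suffix_sub : ∀ {s t : List (ℕ × ℕ)}, s <:+ t → nodeE C t ⊆ nodeE C s := by
  intro s t h
  induction t with
  | nil => rw [List.suffix_nil.mp h]
  | cons p t ih =>
    rcases List.suffix_cons_iff.mp h with h | h
    · rw [h]
    · exact ((nodeE_cons_subset hC1 hC2 hC3 p t).trans Set.inter_subset_left).trans (ih h)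

lemma nodeE_disjoint : ∀ (s t : List (ℕ × ℕ)), s.length = t.length → s ≠ t →
    nodeE C s ∩ nodeE C t = ∅ := by
  intro s
  induction s with
  | nil => intro t h hne; exact absurd (List.eq_nil_of_length_eq_zero h.symm).symm hne
  | cons p s' ih =>
    intro t h hne
    match t with
    | q :: t' =>
      have hlen : s'.length = t'.length := by simpa using h
      by_cases hst : s' = t'
      · subst hst
        have hpq : p ≠ q := by intro hc; exact hne (by rw [hc])
        by_cases hm : p.1 = q.1
        · have hj : p.2 ≠ q.2 := by
            intro hc
            exact hpq (Prod.ext hm hc)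
          have := (nodeE_step_spec hC1 hC2 hC3 s' p.1).2.1 p.2 q.2 hj
          show nodeE C (p :: s') ∩ nodeE C (q :: s') = ∅
          simp only [nodeE]
          rw [← hm] at *
          exact this
        · -- different first indices; wlog p.1 < q.1
          have key : ∀ (a b : ℕ × ℕ), a.1 < b.1 →
              nodeE C (a :: s') ∩ nodeE C (b :: s') = ∅ := by
            intro a b hab
            rw [Set.eq_empty_iff_forall_notMem]
            rintro x ⟨hxa, hxb⟩
            have h1 : x ∈ C s'.length (a.1+1) :=
              ((nodeE_cons_subset hC1 hC2 hC3 a s') hxa).2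
            have h2 : x ∈ C s'.length b.1 := Cmono hC1 hC2 hC3 s'.length (by omega) h1
            have h3 := nodeE_cons_disj_lower hC1 hC2 hC3 b s'
            rw [Set.eq_empty_iff_forall_notMem] at h3
            exact h3 x ⟨hxb, h2⟩
          rcases Nat.lt_or_ge p.1 q.1 with h' | h'
          · exact key p q h'
          · have h'' : q.1 < p.1 := by omega
            rw [Set.inter_comm]
            exact key q p h''
      · have hd := ih t' hlen hst
        rw [Set.eq_empty_iff_forall_notMem] at hd ⊢
        rintro x ⟨hxa, hxb⟩
        refine hd x ⟨?_, ?_⟩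
        · exact ((nodeE_cons_subset hC1 hC2 hC3 p s') hxa).1
        · exact ((nodeE_cons_subset hC1 hC2 hC3 q t') hxb).1

lemma nodeE_cover (hC0 : ∀ n, C n 0 = ∅) {x : ℝ} (t : List (ℕ × ℕ)) (hxt : x ∈ nodeE C t)
    (hxC : x ∈ ⋃ m, C t.length m) : ∃ p : ℕ × ℕ, x ∈ nodeE C (p :: t) := by
  classical
  have hEx : ∃ m, x ∈ C t.length m := Set.mem_iUnion.mp hxC
  have hfind := Nat.find_spec hEx
  set m0 := Nat.find hEx with hm0
  have hm0ne : m0 ≠ 0 ∨ True := Or.inr trivial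
  -- x is in C t.length m0 but not below
  obtain ⟨m, hm⟩ : ∃ m, m0 = m + 1 ∨ m0 = 0 := ⟨m0 - 1, by omega⟩
  rcases hm with hm | hm
  · have hxnot : x ∉ C t.length m := fun hc => by
      have := Nat.find_min' hEx hc; omega
    have hxin : x ∈ C t.length (m+1) := by rw [← hm]; exact hfind
    have hU := (nodeE_step_spec hC1 hC2 hC3 t m).2.2
    have hxU : x ∈ (nodeE C t ∩ C t.length (m+1)) \ (nodeE C t ∩ C t.length m) := by
      refine ⟨⟨hxt, hxin⟩, ?_⟩
      rintro ⟨-, hc⟩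
      exact hxnot hc
    rw [← hU] at hxU
    obtain ⟨j, hj⟩ := Set.mem_iUnion.mp hxU
    exact ⟨(m, j), hj⟩
  · exfalso
    rw [hm] at hfind
    rw [hC0 t.length] at hfind
    exact hfind

end NodeLemmas

end SuslinAux

theorem suslin_scheme_representation (A : Set ℝ)
    (hFsd : ∃ B : ℕ → ℕ → Set ℝ, (∀ n m, IsClosed (B n m)) ∧ A = ⋂ n, ⋃ m, B n m)
    (hmeagre : IsMeagre A) (hnull : MeasureTheory.volume A = 0) :
    ∃ F : ℕ → Set ℝ, (∀ k, IsCompact (F k) ∧ (F k).Nonempty) ∧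
      (∀ k l : ℕ, l < k → (F k ∩ F l).Nonempty → F k ⊆ F l) ∧
      A = ⋂ N : ℕ, ⋃ k ≥ N, F k := by
  classical
  obtain ⟨B, hBclosed, hABeq⟩ := hFsd
  rw [isMeagre_iff_countable_union_isNowhereDense] at hmeagre
  obtain ⟨S, hSnwd, hScount, hScover⟩ := hmeagre
  have hTcount : (insert (∅ : Set ℝ) S).Countable := hScount.insert ∅
  obtain ⟨f, hf⟩ := hTcount.exists_eq_range ⟨∅, Set.mem_insert _ _⟩
  have hfint : ∀ i, interior (closure (f i)) = ∅ := by
    intro i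
    have hmem : f i ∈ insert (∅ : Set ℝ) S := by rw [hf]; exact Set.mem_range_self i
    rcases hmem with h | h
    · rw [h]; simp
    · exact hSnwd _ h
  have hAf : A ⊆ ⋃ i, closure (f i) := by
    refine hScover.trans ?_
    intro x hx
    obtain ⟨u, hu, hxu⟩ := hx
    have hu2 : u ∈ insert (∅ : Set ℝ) S := Set.mem_insert_of_mem _ hu
    rw [hf] at hu2
    obtain ⟨i, hi⟩ := hu2
    exact Set.mem_iUnion.mpr ⟨i, subset_closure (by rw [hi]; exact hxu)⟩
  -- the increasing sequence of closed nowhere dense sets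
  set Mset : ℕ → Set ℝ := fun m => ⋃ i ∈ Finset.range (m+1), closure (f i) with hMset
  have hMclosed : ∀ m, IsClosed (Mset m) := by
    intro m
    exact (Finset.range (m+1)).finite_toSet.isClosed_biUnion (fun i _ => isClosed_closure)
  have hMint : ∀ m, interior (Mset m) = ∅ := by
    intro m
    induction m with
    | zero => simpa [hMset] using hfint 0
    | succ m ih =>
      have hsplit : Mset (m+1) = closure (f (m+1)) ∪ Mset m := by
        simp only [hMset]
        rw [Finset.range_add_one, Finset.set_biUnion_insert]
      rw [hsplit]
      exact SuslinAux.interior_union_eq_empty isClosed_closure (hfint (m+1)) ih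
  have hMmono : ∀ m, Mset m ⊆ Mset (m+1) := by
    intro m x hx
    obtain ⟨i, hi, hxi⟩ := Set.mem_iUnion₂.mp hx
    exact Set.mem_biUnion (Finset.mem_range.mpr (by simp at hi; omega)) hxi
  -- the compact scheme
  set C : ℕ → ℕ → Set ℝ := fun n m =>
    match m with
    | 0 => ∅
    | (m+1) => (⋃ m' ∈ Finset.range (m+1), B n m') ∩ Mset m ∩ Icc (-(m:ℝ)) (m:ℝ)
    with hCdef
  have hC0 : ∀ n, C n 0 = ∅ := fun n => rfl
  have hCsucc : ∀ n m, C n (m+1) =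
      (⋃ m' ∈ Finset.range (m+1), B n m') ∩ Mset m ∩ Icc (-(m:ℝ)) (m:ℝ) := fun n m => rfl
  have hCclosed : ∀ n m, IsClosed (C n m) := by
    intro n m
    match m with
    | 0 => exact isClosed_empty
    | (m+1) =>
      rw [hCsucc]
      exact (((Finset.range (m+1)).finite_toSet.isClosed_biUnion
        (fun i _ => hBclosed n i)).inter (hMclosed m)).inter isClosed_Icc
  have hC1 : ∀ n m, IsCompact (C n m) := by
    intro n m
    match m with
    | 0 => exact isCompact_empty
    | (m+1) =>
      exact IsCompact.of_isClosed_subset isCompact_Icc (hCclosed n (m+1))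
        (by rw [hCsucc]; exact Set.inter_subset_right)
  have hC2 : ∀ n m, interior (C n m) = ∅ := by
    intro n m
    match m with
    | 0 => rw [hC0 n]; exact interior_empty
    | (m+1) =>
      apply eq_empty_of_subset_empty
      calc interior (C n (m+1)) ⊆ interior (Mset m) := by
            apply interior_mono
            rw [hCsucc]
            exact Set.inter_subset_left.trans Set.inter_subset_right
        _ = ∅ := hMint m
  have hC3 : ∀ n m, C n m ⊆ C n (m+1) := by
    intro n m
    match m with
    | 0 => rw [hC0 n]; exact Set.empty_subset _
    | (m+1) =>
      rw [hCsucc, hCsucc]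
      intro x hx
      refine ⟨⟨?_, hMmono m hx.1.2⟩, ?_⟩
      · obtain ⟨i, hi, hxi⟩ := Set.mem_iUnion₂.mp hx.1.1
        exact Set.mem_biUnion (Finset.mem_range.mpr (by simp at hi; omega)) hxi
      · have := hx.2
        simp only [Set.mem_Icc] at this ⊢
        push_cast
        constructor <;> linarith [this.1, this.2]
  have hCB : ∀ n m, C n m ⊆ ⋃ m', B n m' := by
    intro n m
    match m with
    | 0 => rw [hC0 n]; exact Set.empty_subset _
    | (m+1) =>
      rw [hCsucc]
      intro x hx
      obtain ⟨i, _, hxi⟩ := Set.mem_iUnion₂.mp (hx.1.1)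
      exact Set.mem_iUnion.mpr ⟨i, hxi⟩
  have hAC : ∀ n, A ⊆ ⋃ m, C n m := by
    intro n x hxA
    have hxB : x ∈ ⋃ m, B n m := by
      rw [hABeq] at hxA
      exact Set.mem_iInter.mp hxA n
    obtain ⟨m₁, hm₁⟩ := Set.mem_iUnion.mp hxB
    obtain ⟨i₀, hi₀⟩ := Set.mem_iUnion.mp (hAf hxA)
    obtain ⟨m₂, hm₂⟩ := exists_nat_ge |x|
    set m := max m₁ (max i₀ m₂) with hm
    refine Set.mem_iUnion.mpr ⟨m+1, ?_⟩
    rw [hCsucc]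
    refine ⟨⟨?_, ?_⟩, ?_⟩
    · exact Set.mem_biUnion (Finset.mem_range.mpr (by omega)) hm₁
    · exact Set.mem_biUnion (Finset.mem_range.mpr (by omega)) hi₀
    · have h1 : |x| ≤ (m:ℝ) := by
        refine hm₂.trans ?_
        have hmm : m₂ ≤ m := by omega
        exact_mod_cast hmm
      rw [Set.mem_Icc]
      rw [abs_le] at h1
      exact ⟨by linarith [h1.1], h1.2⟩
  -- filler points
  have hdense : Dense (⋂ i, (closure (f i))ᶜ) :=
    dense_iInter_of_isOpen (fun i => isClosed_closure.isOpen_compl)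
      (fun i => interior_eq_empty_iff_dense_compl.mp (hfint i))
  have hξex : ∀ k : ℕ, ∃ y, y ∈ (⋂ i, (closure (f i))ᶜ) ∧ y ∈ Ioo (k:ℝ) (k+1) := by
    intro k
    exact hdense.exists_mem_open isOpen_Ioo ⟨(k:ℝ) + 1/2, by constructor <;> [linarith; linarith]⟩
  choose ξ hξ1 hξ2 using hξex
  -- helper : nodes are inside the meagre hull
  have hnode_hull : ∀ (p : ℕ × ℕ) (t : List (ℕ × ℕ)),
      SuslinAux.nodeE C (p :: t) ⊆ ⋃ i, closure (f i) := by
    intro p t x hx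
    have h1 : x ∈ C t.length (p.1+1) :=
      ((SuslinAux.nodeE_cons_subset hC1 hC2 hC3 p t) hx).2
    rw [hCsucc] at h1
    obtain ⟨i, _, hxi⟩ := Set.mem_iUnion₂.mp h1.1.2
    exact Set.mem_iUnion.mpr ⟨i, hxi⟩
  -- definition of the sequence F
  set F : ℕ → Set ℝ := fun k =>
    if h : SuslinAux.decodeL k ≠ [] ∧ (SuslinAux.nodeE C (SuslinAux.decodeL k)).Nonempty
    then SuslinAux.nodeE C (SuslinAux.decodeL k) else {ξ k}
    with hFdef
  refine ⟨F, ?_, ?_, ?_⟩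
  · -- compact and nonempty
    intro k
    by_cases h : SuslinAux.decodeL k ≠ [] ∧ (SuslinAux.nodeE C (SuslinAux.decodeL k)).Nonempty
    · rw [hFdef]; simp only [dif_pos h]
      exact ⟨SuslinAux.nodeE_compact hC1 hC2 hC3 h.1, h.2⟩
    · rw [hFdef]; simp only [dif_neg h]
      exact ⟨isCompact_singleton, Set.singleton_nonempty _⟩
  · -- nesting condition
    intro k l hlk hne
    by_cases hk : SuslinAux.decodeL k ≠ [] ∧ (SuslinAux.nodeE C (SuslinAux.decodeL k)).Nonempty
    · by_cases hl : SuslinAux.decodeL l ≠ [] ∧ (SuslinAux.nodeE C (SuslinAux.decodeL l)).Nonempty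
      · -- node-node case
        obtain ⟨x, hx⟩ := hne
        rw [hFdef] at hx
        simp only [dif_pos hk, dif_pos hl] at hx
        set s := SuslinAux.decodeL k with hs
        set t := SuslinAux.decodeL l with ht
        have hkc : SuslinAux.codeL s = k := SuslinAux.code_decode k
        have hlc : SuslinAux.codeL t = l := SuslinAux.code_decode l
        rcases lt_trichotomy s.length t.length with hlen | hlen | hlen
        · -- s shorter : s is an ancestor of t, so k < l : contradiction
          exfalso
          have hu : (t.drop (t.length - s.length)).length = s.length := by
            rw [List.length_drop]; omega
          have husuf : t.drop (t.length - s.length) <:+ t := List.drop_suffix _ _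
          have hxu : x ∈ SuslinAux.nodeE C (t.drop (t.length - s.length)) :=
            (SuslinAux.nodeE_suffix_sub hC1 hC2 hC3 husuf) hx.2
          have hueq : t.drop (t.length - s.length) = s := by
            by_contra hc
            have := SuslinAux.nodeE_disjoint hC1 hC2 hC3 _ s (by rw [hu]) hc
            rw [Set.eq_empty_iff_forall_notMem] at this
            exact this x ⟨hxu, hx.1⟩
          have hsuf : s <:+ t := by rw [← hueq]; exact husuf
          have := SuslinAux.codeL_le_of_suffix hsuf
          omega
        · -- equal length : equal nodes
          have hst : s = t := by
            by_contra hc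
            have := SuslinAux.nodeE_disjoint hC1 hC2 hC3 s t hlen hc
            rw [Set.eq_empty_iff_forall_notMem] at this
            exact this x ⟨hx.1, hx.2⟩
          rw [hFdef]
          simp only [dif_pos hk, dif_pos hl, ← hs, ← ht, hst]
          exact subset_rfl
        · -- t shorter : t is an ancestor of s, F k ⊆ F l
          have hu : (s.drop (s.length - t.length)).length = t.length := by
            rw [List.length_drop]; omega
          have husuf : s.drop (s.length - t.length) <:+ s := List.drop_suffix _ _
          have hxu : x ∈ SuslinAux.nodeE C (s.drop (s.length - t.length)) :=
            (SuslinAux.nodeE_suffix_sub hC1 hC2 hC3 husuf) hx.1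
          have hueq : s.drop (s.length - t.length) = t := by
            by_contra hc
            have := SuslinAux.nodeE_disjoint hC1 hC2 hC3 _ t (by rw [hu]) hc
            rw [Set.eq_empty_iff_forall_notMem] at this
            exact this x ⟨hxu, hx.2⟩
          rw [hFdef]
          simp only [dif_pos hk, dif_pos hl, ← hs, ← ht]
          calc SuslinAux.nodeE C s ⊆ SuslinAux.nodeE C (s.drop (s.length - t.length)) :=
                SuslinAux.nodeE_suffix_sub hC1 hC2 hC3 husuf
            _ = SuslinAux.nodeE C t := by rw [hueq]
      · -- F l is a filler singleton, F k a node : they cannot meet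
        exfalso
        obtain ⟨x, hx⟩ := hne
        rw [hFdef] at hx
        simp only [dif_pos hk, dif_neg hl] at hx
        obtain ⟨p, t, hpt⟩ := List.exists_cons_of_ne_nil hk.1
        have hx1 : x ∈ SuslinAux.nodeE C (SuslinAux.decodeL k) := hx.1
        rw [hpt] at hx1
        have h2 : x ∈ ⋃ i, closure (f i) := hnode_hull p t hx1
        have h3 : x = ξ l := hx.2
        obtain ⟨i, hi⟩ := Set.mem_iUnion.mp h2
        have := Set.mem_iInter.mp (hξ1 l) i
        rw [← h3] at this
        exact this hi
    · by_cases hl : SuslinAux.decodeL l ≠ [] ∧ (SuslinAux.nodeE C (SuslinAux.decodeL l)).Nonempty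
      · -- F k filler, F l node : cannot meet
        exfalso
        obtain ⟨x, hx⟩ := hne
        rw [hFdef] at hx
        simp only [dif_neg hk, dif_pos hl] at hx
        obtain ⟨p, t, hpt⟩ := List.exists_cons_of_ne_nil hl.1
        have hx2 : x ∈ SuslinAux.nodeE C (SuslinAux.decodeL l) := hx.2
        rw [hpt] at hx2
        have h2 : x ∈ ⋃ i, closure (f i) := hnode_hull p t hx2
        have h3 : x = ξ k := hx.1
        obtain ⟨i, hi⟩ := Set.mem_iUnion.mp h2
        have := Set.mem_iInter.mp (hξ1 k) i
        rw [← h3] at this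
        exact this hi
      · -- two distinct fillers cannot meet
        exfalso
        obtain ⟨x, hx⟩ := hne
        rw [hFdef] at hx
        simp only [dif_neg hk, dif_neg hl] at hx
        have h1 : x = ξ k := hx.1
        have h2 : x = ξ l := hx.2
        have h3 := hξ2 k
        have h4 := hξ2 l
        rw [← h1] at h3
        rw [← h2] at h4
        rw [Set.mem_Ioo] at h3 h4
        have hr1 : (l:ℝ) < (k:ℝ) + 1 := by linarith [h3.2, h4.1]
        have hr2 : (k:ℝ) < (l:ℝ) + 1 := by linarith [h3.1, h4.2]
        have h5 : l < k + 1 := by exact_mod_cast hr1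
        have h6 : k < l + 1 := by exact_mod_cast hr2
        omega
  · -- the limsup identity
    apply Set.eq_of_subset_of_subset
    · -- A ⊆ limsup
      intro x hxA
      rw [Set.mem_iInter]
      intro N
      -- build a chain of nodes containing x of arbitrary length
      have hchain : ∀ d : ℕ, ∃ s : List (ℕ × ℕ), s.length = d ∧ x ∈ SuslinAux.nodeE C s := by
        intro d
        induction d with
        | zero => exact ⟨[], rfl, Set.mem_univ x⟩
        | succ d ih =>
          obtain ⟨s, hsl, hxs⟩ := ih
          obtain ⟨p, hp⟩ := SuslinAux.nodeE_cover hC1 hC2 hC3 hC0 s hxs (hAC s.length hxA)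
          exact ⟨p :: s, by simp [hsl], hp⟩
      obtain ⟨s, hsl, hxs⟩ := hchain (N+1)
      set k := SuslinAux.codeL s with hk
      have hkN : N < k := by
        have := SuslinAux.length_le_codeL s
        omega
      have hsne : s ≠ [] := by
        intro hc
        rw [hc] at hsl
        simp at hsl
      have hdk : SuslinAux.decodeL k = s := SuslinAux.decode_code s
      have hcond : SuslinAux.decodeL k ≠ [] ∧ (SuslinAux.nodeE C (SuslinAux.decodeL k)).Nonempty := by
        rw [hdk]; exact ⟨hsne, ⟨x, hxs⟩⟩
      refine Set.mem_iUnion₂.mpr ⟨k, by omega, ?_⟩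
      rw [hFdef]
      simp only [dif_pos hcond]
      rw [hdk]
      exact hxs
    · -- limsup ⊆ A
      intro x hx
      rw [hABeq]
      rw [Set.mem_iInter]
      intro n
      -- threshold construction
      set μ : ℕ → ℕ := fun ℓ =>
        if h : ∃ s : List (ℕ × ℕ), s.length = ℓ ∧ x ∈ SuslinAux.nodeE C s
        then SuslinAux.codeL h.choose else 0
        with hμdef
      set Nstar := (Finset.range (n+1)).sup μ + ⌈|x|⌉₊ + 1 with hNstar
      have hxN := Set.mem_iInter.mp hx Nstar
      obtain ⟨k, hkN, hxk⟩ := Set.mem_iUnion₂.mp hxN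
      by_cases hcond : SuslinAux.decodeL k ≠ [] ∧ (SuslinAux.nodeE C (SuslinAux.decodeL k)).Nonempty
      · -- a node containing x with index k ≥ Nstar
        rw [hFdef] at hxk
        simp only [dif_pos hcond] at hxk
        set s := SuslinAux.decodeL k with hs
        have hkc : SuslinAux.codeL s = k := SuslinAux.code_decode k
        -- its depth must exceed n
        have hdepth : n + 1 ≤ s.length := by
          by_contra hc
          push_neg at hc
          have hℓ : s.length ∈ Finset.range (n+1) := Finset.mem_range.mpr (by omega)
          have hex : ∃ s' : List (ℕ × ℕ), s'.length = s.length ∧ x ∈ SuslinAux.nodeE C s' :=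
            ⟨s, rfl, hxk⟩
          have hμval : μ s.length = SuslinAux.codeL hex.choose := by
            rw [hμdef]; simp only [dif_pos hex]
          have hchoose := hex.choose_spec
          have hsame : hex.choose = s := by
            by_contra hcc
            have := SuslinAux.nodeE_disjoint hC1 hC2 hC3 _ s hchoose.1 hcc
            rw [Set.eq_empty_iff_forall_notMem] at this
            exact this x ⟨hchoose.2, hxk⟩
          have hμk : μ s.length = k := by rw [hμval, hsame, hkc]
          have hsup : μ s.length ≤ (Finset.range (n+1)).sup μ := Finset.le_sup hℓ
          omega
        -- pass to the ancestor of depth n+1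
        set u := s.drop (s.length - (n+1)) with hu
        have hul : u.length = n + 1 := by
          rw [hu, List.length_drop]; omega
        have husuf : u <:+ s := List.drop_suffix _ _
        have hxu : x ∈ SuslinAux.nodeE C u :=
          (SuslinAux.nodeE_suffix_sub hC1 hC2 hC3 husuf) hxk
        have hune : u ≠ [] := by
          intro hc; rw [hc] at hul; simp at hul
        obtain ⟨p, t, hpt⟩ := List.exists_cons_of_ne_nil hune
        have htl : t.length = n := by
          have : u.length = t.length + 1 := by rw [hpt]; simp
          omega
        rw [hpt] at hxu
        have h1 : x ∈ C t.length (p.1+1) :=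
          ((SuslinAux.nodeE_cons_subset hC1 hC2 hC3 p t) hxu).2
        rw [htl] at h1
        exact hCB n (p.1+1) h1
      · -- filler case is impossible for k ≥ Nstar
        exfalso
        rw [hFdef] at hxk
        simp only [dif_neg hcond] at hxk
        have h1 : x = ξ k := hxk
        have h2 := hξ2 k
        rw [← h1] at h2
        rw [Set.mem_Ioo] at h2
        have h3 : x ≤ |x| := le_abs_self x
        have h4 : |x| ≤ (⌈|x|⌉₊ : ℝ) := Nat.le_ceil _
        have h5 : (⌈|x|⌉₊ : ℝ) ≤ (k:ℝ) := by
          have hmm : ⌈|x|⌉₊ ≤ k := by omega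
          exact_mod_cast hmm
        linarith [h2.1]
end
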